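/- arXiv:2306.09146 — 2 statements merged into one kernel-verified Lean document; each statement's English description precedes it below -/
import Mathlib

section
/- Let G be a basic piecewise ultrahomogeneous CUH graph in which both D and D̃ are realized. Then for every maximal red clique M_R, every maximal blue clique M_B, and all finite disjoint subsets S, T ⊆ M_R, there exists a vertex v ∈ M_B adjacent to every vertex of S and to no vertex of T; the analogous statement with the roles of M_R and M_B interchanged also holds. (Equivalently, G[M_R ∪ M_B] is isomorphic to the complement of the generic bipartite graph.) -/
open SimpleGraph

/-- A partial colored isomorphism of the 2-colored graph `(G, red)`, defined on the set `S`: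
an injective map preserving colors and adjacency on `S`. -/
def IsPartialIso {V : Type} (G : SimpleGraph V) (red : V → Prop) (S : Set V) (f : V → V) :
    Prop :=
  Set.InjOn f S ∧ (∀ v ∈ S, (red (f v) ↔ red v)) ∧
    ∀ u ∈ S, ∀ v ∈ S, (G.Adj (f u) (f v) ↔ G.Adj u v)

/-- A 2-colored graph is ultrahomogeneous if every isomorphism between two finite induced
colored subgraphs extends to a color-preserving automorphism. -/
def Ultrahomogeneous {V : Type} (G : SimpleGraph V) (red : V → Prop) : Prop :=
  ∀ S : Set V, S.Finite → ∀ f : V → V, IsPartialIso G red S f →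
    ∃ ψ : G ≃g G, (∀ v, red (ψ v) ↔ red v) ∧ ∀ v ∈ S, ψ v = f v

/-- The set `P` induces a disjoint union of cliques in `G` (no induced monochromatic `P₃`). -/
def IsUnionOfCliques {V : Type} (G : SimpleGraph V) (P : Set V) : Prop :=
  ∀ u ∈ P, ∀ v ∈ P, ∀ w ∈ P, G.Adj u v → G.Adj v w → u ≠ w → G.Adj u w

/-- `M` is an inclusion-wise maximal clique of the subgraph of `G` induced on `P`. -/
def IsMaxCliqueIn {V : Type} (G : SimpleGraph V) (P : Set V) (M : Set V) : Prop :=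
  M ⊆ P ∧ G.IsClique M ∧ ∀ M' : Set V, M' ⊆ P → G.IsClique M' → M ⊆ M' → M = M'

/-- `S` is an independent set in `G`. -/
def IsIndepIn {V : Type} (G : SimpleGraph V) (S : Set V) : Prop :=
  ∀ u ∈ S, ∀ v ∈ S, ¬ G.Adj u v

/-- The 2-colored graph `(H, redH)` is realized in `(G, red)`, i.e. isomorphic to an
induced colored subgraph of `G`. -/
def Realizes {V : Type} (G : SimpleGraph V) (red : V → Prop) {W : Type} (H : SimpleGraph W)
    (redH : W → Prop) : Prop :=
  ∃ f : W → V, Function.Injective f ∧ (∀ w, red (f w) ↔ redH w) ∧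
    ∀ u w : W, G.Adj (f u) (f w) ↔ H.Adj u w

/-- `(H, redH)` is minimally omitted in `(G, red)`: it is omitted, but every proper induced
subgraph of it is realized. -/
def MinOmitted {V : Type} (G : SimpleGraph V) (red : V → Prop) {W : Type} (H : SimpleGraph W)
    (redH : W → Prop) : Prop :=
  ¬ Realizes G red H redH ∧
    ∀ S : Set W, S ≠ Set.univ → Realizes G red (H.induce S) (fun x => redH x.1)

/-- Isomorphism of 2-colored graphs. -/
def ColoredIso {V : Type} (G : SimpleGraph V) (red : V → Prop) {W : Type} (H : SimpleGraph W)
    (redH : W → Prop) : Prop :=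
  ∃ e : G ≃g H, ∀ v, red v ↔ redH (e v)

/-- The graph obtained from `G` by complementing the cross edges while keeping the
edges inside each color class. -/
def crossComp {V : Type} (G : SimpleGraph V) (red : V → Prop) : SimpleGraph V :=
  SimpleGraph.fromRel (fun u v =>
    ((red u ↔ red v) ∧ G.Adj u v) ∨ (¬ (red u ↔ red v) ∧ ¬ G.Adj u v))

/-- The blow-up of the 2-colored graph `(H, redH)` (whose red class should be independent),
replacing every red vertex by a copy of `I` forming a clique, joined to the neighbors of the
original vertex. -/
def blowUp {V : Type} (H : SimpleGraph V) (redH : V → Prop) (I : Type) :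
    SimpleGraph ({v : V // redH v} × I ⊕ {v : V // ¬ redH v}) :=
  SimpleGraph.fromRel (fun x y =>
    match x, y with
    | Sum.inl (u, i), Sum.inl (u', i') => H.Adj u.1 u'.1 ∨ (u = u' ∧ i ≠ i')
    | Sum.inl (u, _), Sum.inr b => H.Adj u.1 b.1
    | Sum.inr b, Sum.inl (u, _) => H.Adj b.1 u.1
    | Sum.inr b, Sum.inr b' => H.Adj b.1 b'.1)

/-- The coloring of the blow-up: all vertices replacing red vertices are red. -/
def blowUpRed (V : Type) (redH : V → Prop) (I : Type) :
    ({v : V // redH v} × I ⊕ {v : V // ¬ redH v}) → Prop :=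
  Sum.elim (fun _ => True) (fun _ => False)

/-- `(G, red)` is a blow-up with the red class blown up: it is isomorphic (as a colored graph)
to the blow-up of some `(H, redH)` with independent red class by an `i`-clique, `2 ≤ i ≤ ℵ₀`. -/
def IsBlowUpOf {V : Type} (G : SimpleGraph V) (red : V → Prop) : Prop :=
  ∃ (U : Type) (H : SimpleGraph U) (redH : U → Prop) (I : Type),
    (∀ u v : U, redH u → redH v → ¬ H.Adj u v) ∧
    2 ≤ Cardinal.mk I ∧ Cardinal.mk I ≤ Cardinal.aleph0 ∧
    ∃ e : G ≃g blowUp H redH I, ∀ v, red v ↔ blowUpRed U redH I (e v)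

/-- `(G, red)` is a blow-up (of one of its two color classes). -/
def IsBlowUp {V : Type} (G : SimpleGraph V) (red : V → Prop) : Prop :=
  IsBlowUpOf G red ∨ IsBlowUpOf G (fun v => ¬ red v)

/-- A CUH graph: a countably infinite ultrahomogeneous 2-colored graph in which both
color classes induce disjoint unions of cliques. -/
def IsCUH {V : Type} (G : SimpleGraph V) (red : V → Prop) : Prop :=
  Countable V ∧ Infinite V ∧ Ultrahomogeneous G red ∧
    IsUnionOfCliques G {v | red v} ∧ IsUnionOfCliques G {v | ¬ red v}

/-- A basic CUH graph: a CUH graph which is not a blow-up and where both independence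
numbers are at least 2. -/
def IsBasicCUH {V : Type} (G : SimpleGraph V) (red : V → Prop) : Prop :=
  IsCUH G red ∧ ¬ IsBlowUp G red ∧
    (∃ u v, red u ∧ red v ∧ u ≠ v ∧ ¬ G.Adj u v) ∧
    (∃ u v, ¬ red u ∧ ¬ red v ∧ u ≠ v ∧ ¬ G.Adj u v)

/-- The graph `D`: red vertices `0, 1`, blue vertices `2, 3`, edges
`{01, 23, 02, 03, 12}` (a 2-colored diamond). -/
def Dgraph : SimpleGraph (Fin 4) :=
  SimpleGraph.fromRel (fun x y =>
    (x = 0 ∧ y = 1) ∨ (x = 2 ∧ y = 3) ∨ (x = 0 ∧ y = 2) ∨ (x = 0 ∧ y = 3) ∨ (x = 1 ∧ y = 2))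

/-- The coloring of `D` and `D̃`: `0, 1` are red, `2, 3` are blue. -/
def Dred : Fin 4 → Prop := fun x => x = 0 ∨ x = 1

/-- The graph `D̃`, the cross-edge complement of `D`: the path `0 – 1 – 3 – 2`. -/
def Dtilde : SimpleGraph (Fin 4) :=
  SimpleGraph.fromRel (fun x y => (x = 0 ∧ y = 1) ∨ (x = 1 ∧ y = 3) ∨ (x = 3 ∧ y = 2))

/-- `T_r`: the triangle with two red vertices and one blue vertex. -/
def Tr : SimpleGraph (Fin 3) := ⊤

/-- The coloring of `T_r` and `T̃_r`: `0, 1` red, `2` blue. -/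
def TrRed : Fin 3 → Prop := fun x => x = 0 ∨ x = 1

/-- `T̃_r`: a red edge together with an isolated blue vertex. -/
def TrTilde : SimpleGraph (Fin 3) := SimpleGraph.fromRel (fun x y => x = 0 ∧ y = 1)

/-- `T_b`: the triangle with one red vertex and two blue vertices. -/
def Tb : SimpleGraph (Fin 3) := ⊤

/-- The coloring of `T_b` and `T̃_b`: `0` red, `1, 2` blue. -/
def TbRed : Fin 3 → Prop := fun x => x = 0

/-- `T̃_b`: a blue edge together with an isolated red vertex. -/
def TbTilde : SimpleGraph (Fin 3) := SimpleGraph.fromRel (fun x y => x = 1 ∧ y = 2)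

section Abstract

variable {W : Type} {H : SimpleGraph W} {c : W → Prop}

lemma uh_neg (h : Ultrahomogeneous H c) : Ultrahomogeneous H (fun v => ¬ c v) := by
  intro S hS f hpi
  obtain ⟨hinj, hcol, hadj⟩ := hpi
  obtain ⟨ψ, hψc, hψf⟩ := h S hS f ⟨hinj, fun v hv => not_iff_not.mp (hcol v hv), hadj⟩
  exact ⟨ψ, fun v => not_iff_not.mpr (hψc v), hψf⟩

/-- transport of a pair of disjoint red finsets onto another pair. -/
lemma transport_red (h : Ultrahomogeneous H c)
    (hRC : ∀ u v : W, c u → c v → u ≠ v → H.Adj u v)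
    (X₀ Y₀ S' T' : Finset W)
    (hX₀ : ∀ x ∈ X₀, c x) (hY₀ : ∀ x ∈ Y₀, c x)
    (hS' : ∀ x ∈ S', c x) (hT' : ∀ x ∈ T', c x)
    (hd1 : Disjoint X₀ Y₀) (hd2 : Disjoint S' T')
    (hc1 : X₀.card = S'.card) (hc2 : Y₀.card = T'.card) :
    ∃ ψ : H ≃g H, (∀ v, c (ψ v) ↔ c v) ∧
      (∀ s ∈ S', ∃ x ∈ X₀, ψ x = s) ∧ (∀ t ∈ T', ∃ y ∈ Y₀, ψ y = t) ∧
      (∀ x ∈ X₀, ψ x ∈ S') ∧ (∀ y ∈ Y₀, ψ y ∈ T') := by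
  classical
  have e1 := Finset.equivOfCardEq hc1
  have e2 := Finset.equivOfCardEq hc2
  set f : W → W := fun w =>
    if hw : w ∈ X₀ then (e1 ⟨w, hw⟩ : W)
    else if hw : w ∈ Y₀ then (e2 ⟨w, hw⟩ : W) else w with hf
  have hfX : ∀ x (hx : x ∈ X₀), f x = (e1 ⟨x, hx⟩ : W) := by
    intro x hx; simp only [hf, dif_pos hx]
  have hfY : ∀ y (hy : y ∈ Y₀), f y = (e2 ⟨y, hy⟩ : W) := by
    intro y hy
    have hyX : y ∉ X₀ := Finset.disjoint_right.mp hd1 hy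
    simp only [hf, dif_neg hyX, dif_pos hy]
  have hfXS : ∀ x ∈ X₀, f x ∈ S' := by
    intro x hx; rw [hfX x hx]; exact (e1 ⟨x, hx⟩).2
  have hfYT : ∀ y ∈ Y₀, f y ∈ T' := by
    intro y hy; rw [hfY y hy]; exact (e2 ⟨y, hy⟩).2
  have hmem : ∀ w ∈ (↑(X₀ ∪ Y₀) : Set W), c w := by
    intro w hw
    rcases Finset.mem_union.mp hw with hw | hw
    · exact hX₀ w hw
    · exact hY₀ w hw
  have hmemf : ∀ w ∈ (↑(X₀ ∪ Y₀) : Set W), c (f w) := by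
    intro w hw
    rcases Finset.mem_union.mp hw with hw | hw
    · exact hS' _ (hfXS w hw)
    · exact hT' _ (hfYT w hw)
  have hinj : Set.InjOn f ↑(X₀ ∪ Y₀) := by
    intro a ha b hb hab
    rcases Finset.mem_union.mp ha with ha' | ha' <;>
      rcases Finset.mem_union.mp hb with hb' | hb'
    · rw [hfX a ha', hfX b hb'] at hab
      exact congrArg Subtype.val (e1.injective (Subtype.ext hab))
    · exact absurd (hab ▸ hfXS a ha') (fun hS =>
        Finset.disjoint_left.mp hd2 hS (hab ▸ hfYT b hb' : f a ∈ T') |>.elim)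
    · exact absurd ((hab.symm ▸ hfXS b hb') : f a ∈ S') (fun hS =>
        Finset.disjoint_left.mp hd2 hS (hfYT a ha'))
    · rw [hfY a ha', hfY b hb'] at hab
      exact congrArg Subtype.val (e2.injective (Subtype.ext hab))
  obtain ⟨ψ, hψc, hψeq⟩ := h ↑(X₀ ∪ Y₀) (Finset.finite_toSet _) f
    ⟨hinj, fun v hv => iff_of_true (hmemf v hv) (hmem v hv), by
      intro u hu v hv
      by_cases huv : u = v
      · subst huv; simp
      · have hfuv : f u ≠ f v := fun hh => huv (hinj hu hv hh)
        exact iff_of_true (hRC _ _ (hmemf u hu) (hmemf v hv) hfuv)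
          (hRC _ _ (hmem u hu) (hmem v hv) huv)⟩
  refine ⟨ψ, hψc, ?_, ?_, ?_, ?_⟩
  · intro s hs
    refine ⟨(e1.symm ⟨s, hs⟩ : W), (e1.symm ⟨s, hs⟩).2, ?_⟩
    rw [hψeq _ (by simp [(e1.symm ⟨s, hs⟩).2]), hfX _ (e1.symm ⟨s, hs⟩).2]
    have : e1 ⟨(e1.symm ⟨s, hs⟩ : W), (e1.symm ⟨s, hs⟩).2⟩ = ⟨s, hs⟩ := by
      rw [Subtype.eta]; exact e1.apply_symm_apply _
    rw [this]
  · intro t ht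
    refine ⟨(e2.symm ⟨t, ht⟩ : W), (e2.symm ⟨t, ht⟩).2, ?_⟩
    rw [hψeq _ (by simp [(e2.symm ⟨t, ht⟩).2]), hfY _ (e2.symm ⟨t, ht⟩).2]
    have : e2 ⟨(e2.symm ⟨t, ht⟩ : W), (e2.symm ⟨t, ht⟩).2⟩ = ⟨t, ht⟩ := by
      rw [Subtype.eta]; exact e2.apply_symm_apply _
    rw [this]
  · intro x hx; rw [hψeq _ (by simp [hx])]; exact hfXS x hx
  · intro y hy; rw [hψeq _ (by simp [hy])]; exact hfYT y hy

lemma transport_blue1 (h : Ultrahomogeneous H c) {b₀ b : W} (h0 : ¬ c b₀) (h1 : ¬ c b) :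
    ∃ ψ : H ≃g H, (∀ v, c (ψ v) ↔ c v) ∧ ψ b₀ = b := by
  classical
  set f : W → W := fun w => if w = b₀ then b else w with hf
  have hfb : f b₀ = b := by simp [hf]
  obtain ⟨ψ, hψc, hψeq⟩ := h {b₀} (Set.finite_singleton _) f
    ⟨by intro a ha b' hb' _; rw [Set.mem_singleton_iff] at ha hb'; rw [ha, hb'], by
      intro v hv; rw [Set.mem_singleton_iff] at hv; subst hv
      rw [hfb]; exact iff_of_false h1 h0, by
      intro u hu v hv; rw [Set.mem_singleton_iff] at hu hv; subst hu; subst hv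
      simp⟩
  exact ⟨ψ, hψc, by rw [hψeq b₀ rfl, hfb]⟩

lemma transport_blue2 (h : Ultrahomogeneous H c)
    (hBC : ∀ u v : W, ¬c u → ¬c v → u ≠ v → H.Adj u v)
    {b₁ b₂ b₃ b₄ : W} (h1 : ¬ c b₁) (h2 : ¬ c b₂) (h3 : ¬ c b₃) (h4 : ¬ c b₄)
    (h12 : b₁ ≠ b₂) (h34 : b₃ ≠ b₄) :
    ∃ ψ : H ≃g H, (∀ v, c (ψ v) ↔ c v) ∧ ψ b₁ = b₃ ∧ ψ b₂ = b₄ := by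
  classical
  set f : W → W := fun w => if w = b₁ then b₃ else if w = b₂ then b₄ else w with hf
  have hf1 : f b₁ = b₃ := by simp [hf]
  have hf2 : f b₂ = b₄ := by simp [hf, h12.symm]
  have hmem : ∀ w ∈ ({b₁, b₂} : Set W), ¬ c w := by
    intro w hw; rcases hw with hw | hw
    · rw [hw]; exact h1
    · rw [Set.mem_singleton_iff] at hw; rw [hw]; exact h2
  have hmemf : ∀ w ∈ ({b₁, b₂} : Set W), ¬ c (f w) := by
    intro w hw; rcases hw with hw | hw
    · rw [hw, hf1]; exact h3
    · rw [Set.mem_singleton_iff] at hw; rw [hw, hf2]; exact h4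
  have hfne : ∀ u ∈ ({b₁, b₂} : Set W), ∀ v ∈ ({b₁, b₂} : Set W), u ≠ v → f u ≠ f v := by
    intro u hu v hv huv
    rcases hu with (hu : u = b₁) | (hu : u = b₂) <;> rcases hv with (hv : v = b₁) | (hv : v = b₂) <;>
      subst hu <;> subst hv
    · exact absurd rfl huv
    · rw [hf1, hf2]; exact h34
    · rw [hf1, hf2]; exact h34.symm
    · exact absurd rfl huv
  obtain ⟨ψ, hψc, hψeq⟩ := h {b₁, b₂} (Set.Finite.insert _ (Set.finite_singleton _)) f
    ⟨by intro a ha b hb hab; by_contra hne; exact (hfne a ha b hb hne) hab, by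
      intro v hv; exact iff_of_false (hmemf v hv) (hmem v hv), by
      intro u hu v hv
      by_cases huv : u = v
      · subst huv; simp
      · exact iff_of_true (hBC _ _ (hmemf u hu) (hmemf v hv) (hfne u hu v hv huv))
          (hBC _ _ (hmem u hu) (hmem v hv) huv)⟩
  exact ⟨ψ, hψc, by rw [hψeq b₁ (by simp), hf1], by rw [hψeq b₂ (by simp), hf2]⟩


/-- every blue vertex has two red `Q`-neighbors, given one blue vertex does. -/
lemma blue_twoQ (h : Ultrahomogeneous H c) (Q : W → W → Prop)
    (hQψ : ∀ (ψ : H ≃g H) (u v : W), Q (ψ u) (ψ v) ↔ Q u v)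
    (seedQ : ∃ b x y, ¬c b ∧ c x ∧ c y ∧ x ≠ y ∧ Q b x ∧ Q b y)
    {b : W} (hb : ¬ c b) :
    ∃ x y, c x ∧ c y ∧ x ≠ y ∧ Q b x ∧ Q b y := by
  obtain ⟨b₀, x₀, y₀, hb₀, hx₀, hy₀, hxy₀, hQx₀, hQy₀⟩ := seedQ
  obtain ⟨ψ, hψc, hψb⟩ := transport_blue1 h hb₀ hb
  refine ⟨ψ x₀, ψ y₀, (hψc x₀).mpr hx₀, (hψc y₀).mpr hy₀,
    fun hh => hxy₀ (ψ.toEquiv.injective hh), ?_, ?_⟩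
  · rw [← hψb]; exact (hQψ ψ b₀ x₀).mpr hQx₀
  · rw [← hψb]; exact (hQψ ψ b₀ y₀).mpr hQy₀

lemma claimGen (h : Ultrahomogeneous H c)
    (hRC : ∀ u v : W, c u → c v → u ≠ v → H.Adj u v)
    (hBC : ∀ u v : W, ¬c u → ¬c v → u ≠ v → H.Adj u v)
    (Q : W → W → Prop)
    (hQψ : ∀ (ψ : H ≃g H) (u v : W), Q (ψ u) (ψ v) ↔ Q u v)
    (seedQ : ∃ b x y, ¬c b ∧ c x ∧ c y ∧ x ≠ y ∧ Q b x ∧ Q b y)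
    (seedQ' : ∃ b x y, ¬c b ∧ c x ∧ c y ∧ x ≠ y ∧ ¬ Q b x ∧ ¬ Q b y) :
    ∀ m : ℕ, ∃ b, ¬ c b ∧ ∃ X : Finset W, X.card = m ∧ ∀ x ∈ X, c x ∧ Q b x := by
  classical
  set P : ℕ → Prop := fun k => ∃ b, ¬ c b ∧ ∃ X : Finset W, X.card = k ∧ ∀ x ∈ X, c x ∧ Q b x
    with hPdef
  by_contra hcon
  rw [not_forall] at hcon
  obtain ⟨m, hm⟩ := hcon
  have hm : ¬ P m := hm
  -- P 2 holds
  have hP2 : P 2 := by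
    obtain ⟨b₀, x₀, y₀, hb₀, hx₀, hy₀, hxy₀, hQx₀, hQy₀⟩ := seedQ
    refine ⟨b₀, hb₀, {x₀, y₀}, ?_, ?_⟩
    · rw [Finset.card_insert_of_notMem (by simp [hxy₀]), Finset.card_singleton]
    · intro x hx
      rcases Finset.mem_insert.mp hx with hx | hx
      · subst hx; exact ⟨hx₀, hQx₀⟩
      · rw [Finset.mem_singleton] at hx; subst hx; exact ⟨hy₀, hQy₀⟩
  -- P is downward closed
  have hPdown : ∀ k l, l ≤ k → P k → P l := by
    intro k l hlk ⟨b, hb, X, hXcard, hX⟩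
    obtain ⟨X', hX'sub, hX'card⟩ := Finset.exists_subset_card_eq (s := X) (hXcard ▸ hlk)
    exact ⟨b, hb, X', hX'card, fun x hx => hX x (hX'sub hx)⟩
  have h2m : 2 ≤ m := by
    by_contra hh
    exact hm (hPdown 2 m (by omega) hP2)
  set d := Nat.findGreatest P m with hd
  have hPd : P d := Nat.findGreatest_spec h2m hP2
  have h2d : 2 ≤ d := Nat.le_findGreatest h2m hP2
  have hdm : d < m := lt_of_le_of_ne (Nat.findGreatest_le m) (fun hh => hm (hh ▸ hPd))
  have hPd1 : ¬ P (d + 1) := Nat.findGreatest_is_greatest (n := m) (by rw [← hd]; omega) (by omega)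
  -- exactness
  have hexact : ∀ b (X : Finset W), ¬ c b → X.card = d → (∀ x ∈ X, c x ∧ Q b x) →
      ∀ z, c z → Q b z → z ∈ X := by
    intro b X hb hcard hX z hz hQz
    by_contra hzX
    refine hPd1 ⟨b, hb, insert z X, ?_, ?_⟩
    · rw [Finset.card_insert_of_notMem hzX, hcard]
    · intro x hx
      rcases Finset.mem_insert.mp hx with hx | hx
      · subst hx; exact ⟨hz, hQz⟩
      · exact hX x hx
  obtain ⟨b₀, hb₀, X₀, hX₀card, hX₀⟩ := hPd
  -- two red non-Q-vertices for b₀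
  obtain ⟨y₁, y₂, hcy₁, hcy₂, hyne, hny₁, hny₂⟩ :=
    blue_twoQ h (fun u v => ¬ Q u v) (fun ψ u v => not_iff_not.mpr (hQψ ψ u v)) seedQ' hb₀
  have hy₁X : y₁ ∉ X₀ := fun hh => hny₁ (hX₀ y₁ hh).2
  have hy₂X : y₂ ∉ X₀ := fun hh => hny₂ (hX₀ y₂ hh).2
  -- pick x₁ x₂ in X₀
  have hX₀ne : X₀.Nonempty := Finset.card_pos.mp (by rw [hX₀card]; omega)
  obtain ⟨x₁, hx₁⟩ := hX₀ne
  set A := X₀.erase x₁ with hA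
  have hAcard : A.card = d - 1 := by rw [hA, Finset.card_erase_of_mem hx₁, hX₀card]
  have hAne : A.Nonempty := Finset.card_pos.mp (by rw [hAcard]; omega)
  obtain ⟨x₂, hx₂A⟩ := hAne
  have hx₂ : x₂ ∈ X₀ := Finset.mem_of_mem_erase hx₂A
  set B2 := A.erase x₂ with hB2
  have hB2card : B2.card = d - 2 := by
    rw [hB2, Finset.card_erase_of_mem hx₂A, hAcard]; omega
  have hAsub : A ⊆ X₀ := Finset.erase_subset _ _
  have hB2sub : B2 ⊆ X₀ := fun w hw => hAsub (Finset.mem_of_mem_erase hw)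
  set Y := insert y₁ A with hY
  have hy₁A : y₁ ∉ A := fun hh => hy₁X (hAsub hh)
  have hYcard : Y.card = d := by
    rw [hY, Finset.card_insert_of_notMem hy₁A, hAcard]; omega
  set Z := insert y₁ (insert y₂ B2) with hZ
  have hy₂B2 : y₂ ∉ B2 := fun hh => hy₂X (hB2sub hh)
  have hy₁i : y₁ ∉ insert y₂ B2 := by
    intro hh
    rcases Finset.mem_insert.mp hh with hh | hh
    · exact hyne hh
    · exact hy₁X (hB2sub hh)
  have hZcard : Z.card = d := by
    rw [hZ, Finset.card_insert_of_notMem hy₁i, Finset.card_insert_of_notMem hy₂B2,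
      hB2card]; omega
  have hX₀red : ∀ x ∈ X₀, c x := fun x hx => (hX₀ x hx).1
  have hYred : ∀ x ∈ Y, c x := by
    intro x hx
    rcases Finset.mem_insert.mp hx with hx | hx
    · subst hx; exact hcy₁
    · exact hX₀red x (hAsub hx)
  have hZred : ∀ x ∈ Z, c x := by
    intro x hx
    rcases Finset.mem_insert.mp hx with hx | hx
    · subst hx; exact hcy₁
    · rcases Finset.mem_insert.mp hx with hx | hx
      · subst hx; exact hcy₂
      · exact hX₀red x (hB2sub hx)
  -- bY with Q-set exactly Y
  obtain ⟨ψY, hψYc, hontoY, -, -, -⟩ := transport_red h hRC X₀ ∅ Y ∅ hX₀red (by simp)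
    hYred (by simp) (Finset.disjoint_empty_right _) (Finset.disjoint_empty_right _)
    (by rw [hX₀card, hYcard]) rfl
  set bY := ψY b₀ with hbY
  have hbYblue : ¬ c bY := fun hh => hb₀ ((hψYc b₀).mp hh)
  have hbYQ : ∀ x ∈ Y, c x ∧ Q bY x := by
    intro s hs
    obtain ⟨x, hx, rfl⟩ := hontoY s hs
    exact ⟨(hψYc x).mpr (hX₀red x hx), (hQψ ψY b₀ x).mpr (hX₀ x hx).2⟩
  obtain ⟨ψZ, hψZc, hontoZ, -, -, -⟩ := transport_red h hRC X₀ ∅ Z ∅ hX₀red (by simp)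
    hZred (by simp) (Finset.disjoint_empty_right _) (Finset.disjoint_empty_right _)
    (by rw [hX₀card, hZcard]) rfl
  set bZ := ψZ b₀ with hbZ
  have hbZblue : ¬ c bZ := fun hh => hb₀ ((hψZc b₀).mp hh)
  have hbZQ : ∀ x ∈ Z, c x ∧ Q bZ x := by
    intro s hs
    obtain ⟨x, hx, rfl⟩ := hontoZ s hs
    exact ⟨(hψZc x).mpr (hX₀red x hx), (hQψ ψZ b₀ x).mpr (hX₀ x hx).2⟩
  have hy₁Y : y₁ ∈ Y := Finset.mem_insert_self _ _
  have hy₁Z : y₁ ∈ Z := Finset.mem_insert_self _ _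
  have hb₀bY : b₀ ≠ bY := fun hh => hny₁ (hh ▸ (hbYQ y₁ hy₁Y).2)
  have hb₀bZ : b₀ ≠ bZ := fun hh => hny₁ (hh ▸ (hbZQ y₁ hy₁Z).2)
  obtain ⟨ψ, hψc, hψ1, hψ2⟩ := transport_blue2 h hBC hb₀ hbYblue hb₀ hbZblue hb₀bY hb₀bZ
  -- ψ maps A into X₀ ∩ Z
  have hmaps : ∀ a ∈ A, ψ a ∈ X₀ ∩ Z := by
    intro a ha
    have hca : c a := hX₀red a (hAsub ha)
    have hQ1 : Q b₀ a := (hX₀ a (hAsub ha)).2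
    have hQ2 : Q bY a := (hbYQ a (Finset.mem_insert_of_mem ha)).2
    have hcψa : c (ψ a) := (hψc a).mpr hca
    have hQ1' : Q b₀ (ψ a) := by
      have := (hQψ ψ b₀ a).mpr hQ1; rwa [hψ1] at this
    have hQ2' : Q bZ (ψ a) := by
      have := (hQψ ψ bY a).mpr hQ2; rwa [hψ2] at this
    refine Finset.mem_inter.mpr ⟨?_, ?_⟩
    · exact hexact b₀ X₀ hb₀ hX₀card hX₀ _ hcψa hQ1'
    · exact hexact bZ Z hbZblue hZcard hbZQ _ hcψa hQ2'
  have hcardle : A.card ≤ (X₀ ∩ Z).card :=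
    Finset.card_le_card_of_injOn (fun a => ψ a) hmaps
      (ψ.toEquiv.injective.injOn)
  have hXZ : X₀ ∩ Z ⊆ B2 := by
    intro w hw
    obtain ⟨hwX, hwZ⟩ := Finset.mem_inter.mp hw
    rcases Finset.mem_insert.mp hwZ with hh | hh
    · exact absurd (hh ▸ hwX) hy₁X
    · rcases Finset.mem_insert.mp hh with hh | hh
      · exact absurd (hh ▸ hwX) hy₂X
      · exact hh
  have := Finset.card_le_card hXZ
  omega

lemma main_abstract (h : Ultrahomogeneous H c)
    (hRC : ∀ u v : W, c u → c v → u ≠ v → H.Adj u v)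
    (hBC : ∀ u v : W, ¬c u → ¬c v → u ≠ v → H.Adj u v)
    (seed1 : ∃ b x y, ¬c b ∧ c x ∧ c y ∧ x ≠ y ∧ H.Adj b x ∧ H.Adj b y)
    (seed2 : ∃ b x y, ¬c b ∧ c x ∧ c y ∧ x ≠ y ∧ ¬ H.Adj b x ∧ ¬ H.Adj b y) :
    ∀ S' T' : Finset W, (∀ x ∈ S', c x) → (∀ x ∈ T', c x) → Disjoint S' T' →
      ∃ b, ¬ c b ∧ (∀ x ∈ S', H.Adj b x) ∧ (∀ x ∈ T', ¬ H.Adj b x) := by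
  classical
  intro S' T' hS' hT' hd
  obtain ⟨b₁, hb₁, X, hXcard, hX⟩ := claimGen h hRC hBC H.Adj
    (fun ψ u v => ψ.map_adj_iff) seed1 seed2 S'.card
  obtain ⟨b₂, hb₂, Y₂, hY₂card, hY₂⟩ := claimGen h hRC hBC (fun u v => ¬ H.Adj u v)
    (fun ψ u v => not_iff_not.mpr ψ.map_adj_iff)
    seed2 (by
      obtain ⟨b, x, y, hb, hx, hy, hxy, h1, h2⟩ := seed1
      exact ⟨b, x, y, hb, hx, hy, hxy, not_not.mpr h1, not_not.mpr h2⟩) T'.card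
  obtain ⟨ψ, hψc, hψb⟩ := transport_blue1 h hb₂ hb₁
  set Y := Y₂.image (fun v => ψ v) with hYdef
  have hYcard : Y.card = T'.card := by
    have hcc : (Y₂.image (fun v => ψ v)).card = Y₂.card :=
      Finset.card_image_of_injOn (by intro a _ b _ hab; exact ψ.toEquiv.injective hab)
    rw [hYdef, hcc, hY₂card]
  have hY : ∀ y ∈ Y, c y ∧ ¬ H.Adj b₁ y := by
    intro y hy
    obtain ⟨y₂, hy₂, rfl⟩ := Finset.mem_image.mp hy
    refine ⟨(hψc y₂).mpr (hY₂ y₂ hy₂).1, ?_⟩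
    rw [← hψb]
    exact fun hh => (hY₂ y₂ hy₂).2 (ψ.map_adj_iff.mp hh)
  have hdXY : Disjoint X Y := by
    rw [Finset.disjoint_left]
    intro a haX haY
    exact (hY a haY).2 (hX a haX).2
  obtain ⟨ψ₂, hψ₂c, hS, hT, -, -⟩ := transport_red h hRC X Y S' T'
    (fun x hx => (hX x hx).1) (fun y hy => (hY y hy).1) hS' hT' hdXY hd hXcard hYcard
  refine ⟨ψ₂ b₁, fun hh => hb₁ ((hψ₂c b₁).mp hh), ?_, ?_⟩
  · intro s hs
    obtain ⟨x, hx, rfl⟩ := hS s hs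
    exact ψ₂.map_adj_iff.mpr (hX x hx).2
  · intro t ht
    obtain ⟨y, hy, rfl⟩ := hT t ht
    exact fun hh => (hY y hy).2 (ψ₂.map_adj_iff.mp hh)

end Abstract

section Global

variable {V : Type} {G : SimpleGraph V} {red : V → Prop}

lemma mem_max_clique_of_adj {P : Set V} (hUC : IsUnionOfCliques G P) {M : Set V}
    (hM : IsMaxCliqueIn G P M) {r u : V} (hr : r ∈ M) (hu : u ∈ P) (hadj : G.Adj r u) :
    u ∈ M := by
  obtain ⟨hMP, hMcl, hmax⟩ := hM
  have hclique : G.IsClique (M ∪ {u}) := by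
    rw [SimpleGraph.isClique_iff]
    intro a ha b hb hab
    rcases ha with ha | ha <;> rcases hb with hb | hb
    · exact hMcl ha hb hab
    · rw [Set.mem_singleton_iff] at hb; subst hb
      by_cases har : a = r
      · subst har; exact hadj
      · exact hUC a (hMP ha) r (hMP hr) b hu (hMcl ha hr har) hadj hab
    · rw [Set.mem_singleton_iff] at ha; subst ha
      by_cases hbr : b = r
      · subst hbr; exact hadj.symm
      · exact (hUC b (hMP hb) r (hMP hr) a hu (hMcl hb hr hbr) hadj (Ne.symm hab)).symm
    · rw [Set.mem_singleton_iff] at ha hb; rw [ha, hb] at hab; exact absurd rfl hab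
  have heq := hmax (M ∪ {u}) (by
      intro x hx
      rcases hx with hx | hx
      · exact hMP hx
      · rw [Set.mem_singleton_iff] at hx; subst hx; exact hu) hclique Set.subset_union_left
  rw [heq]; exact Or.inr rfl

lemma max_clique_nonempty {P : Set V} {M : Set V} (hM : IsMaxCliqueIn G P M)
    {u : V} (hu : u ∈ P) : M.Nonempty := by
  obtain ⟨hMP, hMcl, hmax⟩ := hM
  by_contra hne
  rw [Set.not_nonempty_iff_eq_empty] at hne
  have heq := hmax {u} (by simp [hu]) (by
      rw [SimpleGraph.isClique_iff]
      intro a ha b hb hab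
      rw [Set.mem_singleton_iff] at ha hb
      exact absurd (ha.trans hb.symm) hab)
    (by rw [hne]; exact Set.empty_subset _)
  rw [heq] at hne
  exact absurd hne (Set.singleton_ne_empty u)

lemma fromNonadj (hUH : Ultrahomogeneous G red)
    (hRUC : IsUnionOfCliques G {v | red v}) (hBUC : IsUnionOfCliques G {v | ¬ red v})
    (hD : Realizes G red Dgraph Dred)
    {MR MB : Set V} (hMR : IsMaxCliqueIn G {v | red v} MR)
    (hMB : IsMaxCliqueIn G {v | ¬ red v} MB)
    {r b : V} (hr : r ∈ MR) (hb : b ∈ MB) (hnadj : ¬ G.Adj r b) :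
    ∃ r' b', r' ∈ MR ∧ b' ∈ MB ∧ r' ≠ r ∧ b' ≠ b ∧
      G.Adj r' b' ∧ G.Adj r' b ∧ G.Adj r b' := by
  classical
  obtain ⟨fD, hInj, hcol, hadj⟩ := hD
  have hredr : red r := hMR.1 hr
  have hblueb : ¬ red b := hMB.1 hb
  have hrb : r ≠ b := fun hh => hblueb (hh ▸ hredr)
  have hred0 : red (fD 0) := (hcol 0).mpr (Or.inl rfl)
  have hblue2 : ¬ red (fD 2) := fun hh => by
    rcases (hcol 2).mp hh with h | h <;> exact absurd h (by decide)
  have hne13 : fD 1 ≠ fD 3 := fun hh => absurd (hInj hh) (by decide)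
  have hne01 : (0 : Fin 4) ≠ 1 := by decide
  set f : V → V := fun v => if v = fD 1 then r else if v = fD 3 then b else v with hf
  have hf1 : f (fD 1) = r := by simp [hf]
  have hf3 : f (fD 3) = b := by simp [hf, hne13.symm]
  have hS : ∀ v ∈ ({fD 1, fD 3} : Set V), v = fD 1 ∨ v = fD 3 := by
    intro v hv
    rcases hv with hv | hv
    · exact Or.inl hv
    · exact Or.inr hv
  obtain ⟨ψ, hψc, hψeq⟩ := hUH {fD 1, fD 3} (Set.Finite.insert _ (Set.finite_singleton _)) f
    ⟨by
      intro a ha b' hb' hab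
      rcases hS a ha with h | h <;> rcases hS b' hb' with h' | h' <;> subst h <;> subst h'
      · rfl
      · rw [hf1, hf3] at hab; exact absurd hab hrb
      · rw [hf1, hf3] at hab; exact absurd hab.symm hrb
      · rfl, by
      intro v hv
      rcases hS v hv with h | h <;> subst h
      · rw [hf1]; exact iff_of_true hredr ((hcol 1).mpr (Or.inr rfl))
      · rw [hf3]
        exact iff_of_false hblueb (fun hh => by
          rcases (hcol 3).mp hh with h | h <;> exact absurd h (by decide)), by
      intro u hu v hv
      rcases hS u hu with h | h <;> rcases hS v hv with h' | h' <;> subst h <;> subst h'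
      · simp
      · rw [hf1, hf3]
        exact iff_of_false hnadj (fun hh => absurd ((hadj 1 3).mp hh)
          (by simp [Dgraph, SimpleGraph.fromRel_adj]))
      · rw [hf1, hf3]
        exact iff_of_false (fun hh => hnadj hh.symm) (fun hh => absurd ((hadj 3 1).mp hh)
          (by simp [Dgraph, SimpleGraph.fromRel_adj]))
      · simp⟩
  have hψ1 : ψ (fD 1) = r := by rw [hψeq _ (by simp), hf1]
  have hψ3 : ψ (fD 3) = b := by rw [hψeq _ (by simp), hf3]
  refine ⟨ψ (fD 0), ψ (fD 2), ?_, ?_, ?_, ?_, ?_, ?_, ?_⟩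
  · -- ψ (fD 0) ∈ MR
    refine mem_max_clique_of_adj hRUC ⟨hMR.1, hMR.2.1, hMR.2.2⟩ hr
      ((hψc (fD 0)).mpr hred0) ?_
    have : G.Adj (ψ (fD 1)) (ψ (fD 0)) :=
      ψ.map_adj_iff.mpr ((hadj 1 0).mpr (by simp [Dgraph, SimpleGraph.fromRel_adj]))
    rwa [hψ1] at this
  · -- ψ (fD 2) ∈ MB
    refine mem_max_clique_of_adj hBUC ⟨hMB.1, hMB.2.1, hMB.2.2⟩ hb
      (fun hh => hblue2 ((hψc (fD 2)).mp hh)) ?_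
    have : G.Adj (ψ (fD 3)) (ψ (fD 2)) :=
      ψ.map_adj_iff.mpr ((hadj 3 2).mpr (by simp [Dgraph, SimpleGraph.fromRel_adj]))
    rwa [hψ3] at this
  · intro hh
    rw [← hψ1] at hh
    exact absurd (hInj (ψ.toEquiv.injective hh)) (by decide)
  · intro hh
    rw [← hψ3] at hh
    exact absurd (hInj (ψ.toEquiv.injective hh)) (by decide)
  · exact ψ.map_adj_iff.mpr ((hadj 0 2).mpr (by simp [Dgraph, SimpleGraph.fromRel_adj]))
  · have : G.Adj (ψ (fD 0)) (ψ (fD 3)) :=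
      ψ.map_adj_iff.mpr ((hadj 0 3).mpr (by simp [Dgraph, SimpleGraph.fromRel_adj]))
    rwa [hψ3] at this
  · have : G.Adj (ψ (fD 1)) (ψ (fD 2)) :=
      ψ.map_adj_iff.mpr ((hadj 1 2).mpr (by simp [Dgraph, SimpleGraph.fromRel_adj]))
    rwa [hψ1] at this

lemma fromAdj (hUH : Ultrahomogeneous G red)
    (hRUC : IsUnionOfCliques G {v | red v}) (hBUC : IsUnionOfCliques G {v | ¬ red v})
    (hDt : Realizes G red Dtilde Dred)
    {MR MB : Set V} (hMR : IsMaxCliqueIn G {v | red v} MR)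
    (hMB : IsMaxCliqueIn G {v | ¬ red v} MB)
    {r b : V} (hr : r ∈ MR) (hb : b ∈ MB) (hadjrb : G.Adj r b) :
    ∃ r' b', r' ∈ MR ∧ b' ∈ MB ∧ r' ≠ r ∧ b' ≠ b ∧
      ¬ G.Adj r' b' ∧ ¬ G.Adj r' b ∧ ¬ G.Adj r b' := by
  classical
  obtain ⟨fD, hInj, hcol, hadj⟩ := hDt
  have hredr : red r := hMR.1 hr
  have hblueb : ¬ red b := hMB.1 hb
  have hrb : r ≠ b := fun hh => hblueb (hh ▸ hredr)
  have hred0 : red (fD 0) := (hcol 0).mpr (Or.inl rfl)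
  have hblue2 : ¬ red (fD 2) := fun hh => by
    rcases (hcol 2).mp hh with h | h <;> exact absurd h (by decide)
  have hne13 : fD 1 ≠ fD 3 := fun hh => absurd (hInj hh) (by decide)
  set f : V → V := fun v => if v = fD 1 then r else if v = fD 3 then b else v with hf
  have hf1 : f (fD 1) = r := by simp [hf]
  have hf3 : f (fD 3) = b := by simp [hf, hne13.symm]
  have hS : ∀ v ∈ ({fD 1, fD 3} : Set V), v = fD 1 ∨ v = fD 3 := by
    intro v hv
    rcases hv with hv | hv
    · exact Or.inl hv
    · exact Or.inr hv
  obtain ⟨ψ, hψc, hψeq⟩ := hUH {fD 1, fD 3} (Set.Finite.insert _ (Set.finite_singleton _)) f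
    ⟨by
      intro a ha b' hb' hab
      rcases hS a ha with h | h <;> rcases hS b' hb' with h' | h' <;> subst h <;> subst h'
      · rfl
      · rw [hf1, hf3] at hab; exact absurd hab hrb
      · rw [hf1, hf3] at hab; exact absurd hab.symm hrb
      · rfl, by
      intro v hv
      rcases hS v hv with h | h <;> subst h
      · rw [hf1]; exact iff_of_true hredr ((hcol 1).mpr (Or.inr rfl))
      · rw [hf3]
        exact iff_of_false hblueb (fun hh => by
          rcases (hcol 3).mp hh with h | h <;> exact absurd h (by decide)), by
      intro u hu v hv
      rcases hS u hu with h | h <;> rcases hS v hv with h' | h' <;> subst h <;> subst h'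
      · simp
      · rw [hf1, hf3]
        exact iff_of_true hadjrb ((hadj 1 3).mpr (by simp [Dtilde, SimpleGraph.fromRel_adj]))
      · rw [hf1, hf3]
        exact iff_of_true hadjrb.symm
          ((hadj 3 1).mpr (by simp [Dtilde, SimpleGraph.fromRel_adj]))
      · simp⟩
  have hψ1 : ψ (fD 1) = r := by rw [hψeq _ (by simp), hf1]
  have hψ3 : ψ (fD 3) = b := by rw [hψeq _ (by simp), hf3]
  have hDt02 : ¬ Dtilde.Adj 0 2 := by simp [Dtilde, SimpleGraph.fromRel_adj]
  have hDt03 : ¬ Dtilde.Adj 0 3 := by simp [Dtilde, SimpleGraph.fromRel_adj]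
  have hDt12 : ¬ Dtilde.Adj 1 2 := by simp [Dtilde, SimpleGraph.fromRel_adj]
  refine ⟨ψ (fD 0), ψ (fD 2), ?_, ?_, ?_, ?_, ?_, ?_, ?_⟩
  · refine mem_max_clique_of_adj hRUC ⟨hMR.1, hMR.2.1, hMR.2.2⟩ hr
      ((hψc (fD 0)).mpr hred0) ?_
    have : G.Adj (ψ (fD 1)) (ψ (fD 0)) :=
      ψ.map_adj_iff.mpr ((hadj 1 0).mpr (by simp [Dtilde, SimpleGraph.fromRel_adj]))
    rwa [hψ1] at this
  · refine mem_max_clique_of_adj hBUC ⟨hMB.1, hMB.2.1, hMB.2.2⟩ hb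
      (fun hh => hblue2 ((hψc (fD 2)).mp hh)) ?_
    have : G.Adj (ψ (fD 3)) (ψ (fD 2)) :=
      ψ.map_adj_iff.mpr ((hadj 3 2).mpr (by simp [Dtilde, SimpleGraph.fromRel_adj]))
    rwa [hψ3] at this
  · intro hh
    rw [← hψ1] at hh
    exact absurd (hInj (ψ.toEquiv.injective hh)) (by decide)
  · intro hh
    rw [← hψ3] at hh
    exact absurd (hInj (ψ.toEquiv.injective hh)) (by decide)
  · exact fun hh => hDt02 ((hadj 0 2).mp (ψ.map_adj_iff.mp hh))
  · intro hh
    rw [← hψ3] at hh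
    exact hDt03 ((hadj 0 3).mp (ψ.map_adj_iff.mp hh))
  · intro hh
    rw [← hψ1] at hh
    exact hDt12 ((hadj 1 2).mp (ψ.map_adj_iff.mp hh))

lemma allSeeds (hUH : Ultrahomogeneous G red)
    (hRUC : IsUnionOfCliques G {v | red v}) (hBUC : IsUnionOfCliques G {v | ¬ red v})
    (hD : Realizes G red Dgraph Dred) (hDt : Realizes G red Dtilde Dred)
    {MR MB : Set V} (hMR : IsMaxCliqueIn G {v | red v} MR)
    (hMB : IsMaxCliqueIn G {v | ¬ red v} MB)
    (hRne : ∃ u, red u) (hBne : ∃ u, ¬ red u) :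
    (∃ b x y, b ∈ MB ∧ x ∈ MR ∧ y ∈ MR ∧ x ≠ y ∧ G.Adj b x ∧ G.Adj b y) ∧
    (∃ b x y, b ∈ MB ∧ x ∈ MR ∧ y ∈ MR ∧ x ≠ y ∧ ¬ G.Adj b x ∧ ¬ G.Adj b y) ∧
    (∃ r x y, r ∈ MR ∧ x ∈ MB ∧ y ∈ MB ∧ x ≠ y ∧ G.Adj r x ∧ G.Adj r y) ∧
    (∃ r x y, r ∈ MR ∧ x ∈ MB ∧ y ∈ MB ∧ x ≠ y ∧ ¬ G.Adj r x ∧ ¬ G.Adj r y) := by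
  obtain ⟨u, hu⟩ := hRne
  obtain ⟨w, hw⟩ := hBne
  obtain ⟨rr, hrr⟩ := max_clique_nonempty hMR (show u ∈ {v | red v} from hu)
  obtain ⟨bb, hbb⟩ := max_clique_nonempty hMB (show w ∈ {v | ¬ red v} from hw)
  have pos : ∀ r b, r ∈ MR → b ∈ MB → ¬ G.Adj r b →
      (∃ b' x y, b' ∈ MB ∧ x ∈ MR ∧ y ∈ MR ∧ x ≠ y ∧ G.Adj b' x ∧ G.Adj b' y) ∧
      (∃ r' x y, r' ∈ MR ∧ x ∈ MB ∧ y ∈ MB ∧ x ≠ y ∧ G.Adj r' x ∧ G.Adj r' y) ∧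
      (∃ r' b', r' ∈ MR ∧ b' ∈ MB ∧ G.Adj r' b') := by
    intro r b hr hb hn
    obtain ⟨r', b', hr', hb', hner, hneb, h1, h2, h3⟩ :=
      fromNonadj hUH hRUC hBUC hD hMR hMB hr hb hn
    exact ⟨⟨b', r', r, hb', hr', hr, hner, h1.symm, h3.symm⟩,
      ⟨r', b', b, hr', hb', hb, hneb, h1, h2⟩, ⟨r', b', hr', hb', h1⟩⟩
  have neg : ∀ r b, r ∈ MR → b ∈ MB → G.Adj r b →
      (∃ b' x y, b' ∈ MB ∧ x ∈ MR ∧ y ∈ MR ∧ x ≠ y ∧ ¬ G.Adj b' x ∧ ¬ G.Adj b' y) ∧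
      (∃ r' x y, r' ∈ MR ∧ x ∈ MB ∧ y ∈ MB ∧ x ≠ y ∧ ¬ G.Adj r' x ∧ ¬ G.Adj r' y) ∧
      (∃ r' b', r' ∈ MR ∧ b' ∈ MB ∧ ¬ G.Adj r' b') := by
    intro r b hr hb hn
    obtain ⟨r', b', hr', hb', hner, hneb, h1, h2, h3⟩ :=
      fromAdj hUH hRUC hBUC hDt hMR hMB hr hb hn
    exact ⟨⟨b', r', r, hb', hr', hr, hner, fun hh => h1 hh.symm, fun hh => h3 hh.symm⟩,
      ⟨r', b', b, hr', hb', hb, hneb, h1, h2⟩, ⟨r', b', hr', hb', h1⟩⟩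
  by_cases hadj : G.Adj rr bb
  · obtain ⟨nb, nr, r₂, b₂, hr₂, hb₂, hn₂⟩ := neg rr bb hrr hbb hadj
    obtain ⟨pb, pr, -⟩ := pos r₂ b₂ hr₂ hb₂ hn₂
    exact ⟨pb, nb, pr, nr⟩
  · obtain ⟨pb, pr, r₂, b₂, hr₂, hb₂, hn₂⟩ := pos rr bb hrr hbb hadj
    obtain ⟨nb, nr, -⟩ := neg r₂ b₂ hr₂ hb₂ hn₂
    exact ⟨pb, nb, pr, nr⟩

end Global

/-- in a basic piecewise ultrahomogeneous CUH graph realizing `D` and `D̃`,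
for every maximal red clique `M_R`, maximal blue clique `M_B` and finite disjoint
`S, T ⊆ M_R` there is a vertex of `M_B` adjacent to all of `S` and none of `T`;
and symmetrically with the roles of `M_R` and `M_B` interchanged. -/
theorem stmt_17 {V : Type} (G : SimpleGraph V) (red : V → Prop)
    (hG : IsBasicCUH G red)
    (hpw : ∀ MR MB : Set V, IsMaxCliqueIn G {v | red v} MR →
      IsMaxCliqueIn G {v | ¬ red v} MB →
      Ultrahomogeneous (G.induce (MR ∪ MB)) (fun x => red x.1))
    (hD : Realizes G red Dgraph Dred) (hDt : Realizes G red Dtilde Dred) :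
    ∀ MR MB : Set V, IsMaxCliqueIn G {v | red v} MR → IsMaxCliqueIn G {v | ¬ red v} MB →
      (∀ S T : Finset V, ↑S ⊆ MR → ↑T ⊆ MR → Disjoint S T →
        ∃ v ∈ MB, (∀ u ∈ S, G.Adj v u) ∧ (∀ u ∈ T, ¬ G.Adj v u)) ∧
      (∀ S T : Finset V, ↑S ⊆ MB → ↑T ⊆ MB → Disjoint S T →
        ∃ v ∈ MR, (∀ u ∈ S, G.Adj v u) ∧ (∀ u ∈ T, ¬ G.Adj v u)) := by
  classical
  obtain ⟨⟨hcount, hinf, hUH, hRUC, hBUC⟩, hnotblow, ⟨u₁, u₂, hru₁, hru₂, hune, hnadju⟩,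
    ⟨w₁, w₂, hbw₁, hbw₂, hwne, hnadjw⟩⟩ := hG
  intro MR MB hMR hMB
  have hH : Ultrahomogeneous (G.induce (MR ∪ MB)) (fun x => red x.1) := hpw MR MB hMR hMB
  obtain ⟨seedBpos, seedBneg, seedRpos, seedRneg⟩ :=
    allSeeds hUH hRUC hBUC hD hDt hMR hMB ⟨u₁, hru₁⟩ ⟨w₁, hbw₁⟩
  -- membership translations
  have hmemR : ∀ x : ↥(MR ∪ MB), red x.1 → x.1 ∈ MR := by
    intro x hx
    rcases x.2 with h | h
    · exact h
    · exact absurd hx (hMB.1 h)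
  have hmemB : ∀ x : ↥(MR ∪ MB), ¬ red x.1 → x.1 ∈ MB := by
    intro x hx
    rcases x.2 with h | h
    · exact absurd (hMR.1 h) hx
    · exact h
  have hRC : ∀ u v : ↥(MR ∪ MB), red u.1 → red v.1 → u ≠ v →
      (G.induce (MR ∪ MB)).Adj u v := by
    intro u v hu hv hne
    exact hMR.2.1 (hmemR u hu) (hmemR v hv) (fun hh => hne (Subtype.ext hh))
  have hBC : ∀ u v : ↥(MR ∪ MB), ¬ red u.1 → ¬ red v.1 → u ≠ v →
      (G.induce (MR ∪ MB)).Adj u v := by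
    intro u v hu hv hne
    exact hMB.2.1 (hmemB u hu) (hmemB v hv) (fun hh => hne (Subtype.ext hh))
  constructor
  · -- blue witness for red sets
    intro S T hS hT hST
    obtain ⟨b₀, x₀, y₀, hb₀, hx₀, hy₀, hxy₀, ha₁, ha₂⟩ := seedBpos
    obtain ⟨b₁, x₁, y₁, hb₁, hx₁, hy₁, hxy₁, hn₁, hn₂⟩ := seedBneg
    have seed1 : ∃ b x y : ↥(MR ∪ MB), ¬ red b.1 ∧ red x.1 ∧ red y.1 ∧ x ≠ y ∧
        (G.induce (MR ∪ MB)).Adj b x ∧ (G.induce (MR ∪ MB)).Adj b y :=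
      ⟨⟨b₀, Or.inr hb₀⟩, ⟨x₀, Or.inl hx₀⟩, ⟨y₀, Or.inl hy₀⟩, hMB.1 hb₀, hMR.1 hx₀,
        hMR.1 hy₀, fun hh => hxy₀ (congrArg Subtype.val hh), ha₁, ha₂⟩
    have seed2 : ∃ b x y : ↥(MR ∪ MB), ¬ red b.1 ∧ red x.1 ∧ red y.1 ∧ x ≠ y ∧
        ¬ (G.induce (MR ∪ MB)).Adj b x ∧ ¬ (G.induce (MR ∪ MB)).Adj b y :=
      ⟨⟨b₁, Or.inr hb₁⟩, ⟨x₁, Or.inl hx₁⟩, ⟨y₁, Or.inl hy₁⟩, hMB.1 hb₁, hMR.1 hx₁,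
        hMR.1 hy₁, fun hh => hxy₁ (congrArg Subtype.val hh), hn₁, hn₂⟩
    set S' : Finset ↥(MR ∪ MB) := S.subtype (· ∈ MR ∪ MB) with hS'def
    set T' : Finset ↥(MR ∪ MB) := T.subtype (· ∈ MR ∪ MB) with hT'def
    obtain ⟨b, hbblue, hbS, hbT⟩ := main_abstract hH hRC hBC seed1 seed2 S' T'
      (by intro x hx; exact hMR.1 (hS (Finset.mem_subtype.mp hx)))
      (by intro x hx; exact hMR.1 (hT (Finset.mem_subtype.mp hx)))
      (by
        rw [Finset.disjoint_left]
        intro a ha ha'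
        exact Finset.disjoint_left.mp hST (Finset.mem_subtype.mp ha)
          (Finset.mem_subtype.mp ha'))
    refine ⟨b.1, hmemB b hbblue, ?_, ?_⟩
    · intro u hu
      exact hbS ⟨u, Or.inl (hS hu)⟩ (Finset.mem_subtype.mpr hu)
    · intro u hu
      exact fun hh => hbT ⟨u, Or.inl (hT hu)⟩ (Finset.mem_subtype.mpr hu) hh
  · -- red witness for blue sets
    intro S T hS hT hST
    obtain ⟨r₀, x₀, y₀, hr₀, hx₀, hy₀, hxy₀, ha₁, ha₂⟩ := seedRpos
    obtain ⟨r₁, x₁, y₁, hr₁, hx₁, hy₁, hxy₁, hn₁, hn₂⟩ := seedRneg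
    have seed1 : ∃ b x y : ↥(MR ∪ MB), ¬ ¬ red b.1 ∧ ¬ red x.1 ∧ ¬ red y.1 ∧ x ≠ y ∧
        (G.induce (MR ∪ MB)).Adj b x ∧ (G.induce (MR ∪ MB)).Adj b y :=
      ⟨⟨r₀, Or.inl hr₀⟩, ⟨x₀, Or.inr hx₀⟩, ⟨y₀, Or.inr hy₀⟩, not_not.mpr (hMR.1 hr₀),
        hMB.1 hx₀, hMB.1 hy₀, fun hh => hxy₀ (congrArg Subtype.val hh), ha₁, ha₂⟩
    have seed2 : ∃ b x y : ↥(MR ∪ MB), ¬ ¬ red b.1 ∧ ¬ red x.1 ∧ ¬ red y.1 ∧ x ≠ y ∧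
        ¬ (G.induce (MR ∪ MB)).Adj b x ∧ ¬ (G.induce (MR ∪ MB)).Adj b y :=
      ⟨⟨r₁, Or.inl hr₁⟩, ⟨x₁, Or.inr hx₁⟩, ⟨y₁, Or.inr hy₁⟩, not_not.mpr (hMR.1 hr₁),
        hMB.1 hx₁, hMB.1 hy₁, fun hh => hxy₁ (congrArg Subtype.val hh), hn₁, hn₂⟩
    set S' : Finset ↥(MR ∪ MB) := S.subtype (· ∈ MR ∪ MB) with hS'def
    set T' : Finset ↥(MR ∪ MB) := T.subtype (· ∈ MR ∪ MB) with hT'def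
    obtain ⟨b, hbred, hbS, hbT⟩ := main_abstract (c := fun x : ↥(MR ∪ MB) => ¬ red x.1)
      (uh_neg hH) hBC (by intro u v hu hv hne; exact hRC u v (not_not.mp hu) (not_not.mp hv) hne)
      seed1 seed2 S' T'
      (by intro x hx; exact hMB.1 (hS (Finset.mem_subtype.mp hx)))
      (by intro x hx; exact hMB.1 (hT (Finset.mem_subtype.mp hx)))
      (by
        rw [Finset.disjoint_left]
        intro a ha ha'
        exact Finset.disjoint_left.mp hST (Finset.mem_subtype.mp ha)
          (Finset.mem_subtype.mp ha'))
    refine ⟨b.1, hmemR b (not_not.mp hbred), ?_, ?_⟩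
    · intro u hu
      exact hbS ⟨u, Or.inr (hS hu)⟩ (Finset.mem_subtype.mpr hu)
    · intro u hu
      exact fun hh => hbT ⟨u, Or.inr (hT hu)⟩ (Finset.mem_subtype.mpr hu) hh
end

section
/- Let G be a basic piecewise ultrahomogeneous CUH graph in which both D and D̃ are realized. Then a finite 2-colored graph H is realized in G if and only if both color classes of H induce disjoint unions of cliques, the red vertices of H form a disjoint union of at most α_R cliques, and the blue vertices of H form a disjoint union of at most α_B cliques. (Hence the age of G equals the class A_{α_R,α_B}, so G is isomorphic to the Fraïssé limit G_{α_R,α_B} of this class.) -/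
open SimpleGraph

namespace Stmt19

open SimpleGraph

attribute [local instance 0] Classical.propDecidable

variable {V : Type}

/-- The maximal clique (connected component) of `u` inside the class `P`. -/
def cliqueOf (G : SimpleGraph V) (P : Set V) (u : V) : Set V :=
  {v | v ∈ P ∧ (v = u ∨ G.Adj u v)}

variable {G : SimpleGraph V}

lemma mem_cliqueOf_self {P : Set V} {u : V} (hu : u ∈ P) : u ∈ cliqueOf G P u :=
  ⟨hu, Or.inl rfl⟩

lemma cliqueOf_isMax {P : Set V} (hUC : IsUnionOfCliques G P) {u : V} (hu : u ∈ P) :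
    IsMaxCliqueIn G P (cliqueOf G P u) := by
  refine ⟨fun v hv => hv.1, ?_, ?_⟩
  · intro x hx y hy hxy
    rcases hx.2 with rfl | hx2
    · rcases hy.2 with rfl | hy2
      · exact absurd rfl hxy
      · exact hy2
    · rcases hy.2 with rfl | hy2
      · exact hx2.symm
      · exact hUC x hx.1 u hu y hy.1 hx2.symm hy2 hxy
  · intro M' hM'P hM'cl hsub
    apply Set.Subset.antisymm hsub
    intro x hx
    refine ⟨hM'P hx, ?_⟩
    by_cases hxu : x = u
    · exact Or.inl hxu
    · exact Or.inr (hM'cl (hsub (mem_cliqueOf_self hu)) hx (fun h => hxu h.symm))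

lemma maxclique_eq_cliqueOf {P M : Set V} (hUC : IsUnionOfCliques G P)
    (hM : IsMaxCliqueIn G P M) {w : V} (hw : w ∈ M) : M = cliqueOf G P w := by
  apply hM.2.2
  · exact fun x hx => hx.1
  · exact (cliqueOf_isMax hUC (hM.1 hw)).2.1
  · intro x hx
    refine ⟨hM.1 hx, ?_⟩
    by_cases hxw : x = w
    · exact Or.inl hxw
    · exact Or.inr (hM.2.1 hw hx (fun h => hxw h.symm))

lemma maxclique_nonempty {P M : Set V} (hP : P.Nonempty) (hM : IsMaxCliqueIn G P M) :
    M.Nonempty := by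
  by_contra h
  rw [Set.not_nonempty_iff_eq_empty] at h
  obtain ⟨u, hu⟩ := hP
  have := hM.2.2 {u} (by simpa using hu) (by simp [SimpleGraph.isClique_iff, Set.Pairwise])
    (by simp [h])
  rw [h] at this
  exact (Set.singleton_ne_empty u) this.symm

lemma mem_maxclique_of_adj {P M : Set V} (hUC : IsUnionOfCliques G P)
    (hM : IsMaxCliqueIn G P M) {x z : V} (hx : x ∈ M) (hz : z ∈ P) (ha : G.Adj x z) :
    z ∈ M := by
  rw [maxclique_eq_cliqueOf hUC hM hx]
  exact ⟨hz, Or.inr ha⟩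

lemma maxclique_adj {P M : Set V} (hM : IsMaxCliqueIn G P M) {x z : V}
    (hx : x ∈ M) (hz : z ∈ M) (hne : x ≠ z) : G.Adj x z :=
  hM.2.1 hx hz hne

lemma not_adj_of_not_mem_maxclique {P M : Set V} (hUC : IsUnionOfCliques G P)
    (hM : IsMaxCliqueIn G P M) {x z : V} (hx : x ∈ M) (hz : z ∈ P) (hzM : z ∉ M) :
    ¬ G.Adj x z := fun h => hzM (mem_maxclique_of_adj hUC hM hx hz h)

section Forward

/-- Forward direction: the number of maximal cliques in a class of a realized graph is
at most the corresponding number for `G`. -/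
lemma card_maxCliques_le {W : Type} {H : SimpleGraph W} {P : Set V} {Q : Set W}
    (hUP : IsUnionOfCliques G P) (f : W → V) (hf : Function.Injective f)
    (hQP : ∀ w, f w ∈ P ↔ w ∈ Q)
    (hadj : ∀ u w, G.Adj (f u) (f w) ↔ H.Adj u w)
    {u₀ : V} (hu₀ : u₀ ∈ P) :
    Cardinal.mk {M : Set W // IsMaxCliqueIn H Q M} ≤
      Cardinal.mk {M : Set V // IsMaxCliqueIn G P M} := by
  classical
  have hQempty : ∀ M : Set W, IsMaxCliqueIn H Q M → M = ∅ → Q = ∅ := by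
    intro M hM hMe
    by_contra hQ
    rw [← Set.not_nonempty_iff_eq_empty] at hQ
    push_neg at hQ
    exact absurd hMe (Set.nonempty_iff_ne_empty.mp (maxclique_nonempty hQ hM))
  have hcenter : ∀ (M : Set W), IsMaxCliqueIn H Q M → ∀ w ∈ M, f w ∈ P := by
    intro M hM w hw
    exact (hQP w).mpr (hM.1 hw)
  set Φ : {M : Set W // IsMaxCliqueIn H Q M} → {M : Set V // IsMaxCliqueIn G P M} :=
    fun M => if h : M.1.Nonempty then
      ⟨cliqueOf G P (f h.choose), cliqueOf_isMax hUP (hcenter M.1 M.2 _ h.choose_spec)⟩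
    else ⟨cliqueOf G P u₀, cliqueOf_isMax hUP hu₀⟩ with hΦ
  apply Cardinal.mk_le_of_injective (f := Φ)
  intro M₁ M₂ heq
  have hHUoC : IsUnionOfCliques H Q := by
    intro u hu v hv w hw h1 h2 hne
    rw [← hadj] at h1 h2 ⊢
    exact hUP (f u) ((hQP u).mpr hu) (f v) ((hQP v).mpr hv) (f w) ((hQP w).mpr hw) h1 h2
      (fun h => hne (hf h))
  by_cases h1 : M₁.1.Nonempty
  · by_cases h2 : M₂.1.Nonempty
    · set w₁ := h1.choose with hw₁
      set w₂ := h2.choose with hw₂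
      have hw₁M : w₁ ∈ M₁.1 := h1.choose_spec
      have hw₂M : w₂ ∈ M₂.1 := h2.choose_spec
      have heq' : cliqueOf G P (f w₁) = cliqueOf G P (f w₂) := by
        have h := congrArg Subtype.val heq
        rw [hΦ] at h
        simp only [dif_pos h1, dif_pos h2] at h
        exact h
      have hfw2 : f w₂ ∈ cliqueOf G P (f w₁) := by
        rw [heq']
        exact mem_cliqueOf_self (hcenter M₂.1 M₂.2 _ hw₂M)
      have hw2M1 : w₂ ∈ M₁.1 := by
        rcases hfw2.2 with h | h
        · rw [hf h]; exact hw₁M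
        · exact mem_maxclique_of_adj hHUoC M₁.2 hw₁M (M₂.2.1 hw₂M) ((hadj w₁ w₂).mp h)
      have e1 : M₁.1 = cliqueOf H Q w₂ := maxclique_eq_cliqueOf hHUoC M₁.2 hw2M1
      have e2 : M₂.1 = cliqueOf H Q w₂ := maxclique_eq_cliqueOf hHUoC M₂.2 hw₂M
      exact Subtype.ext (e1.trans e2.symm)
    · exfalso
      rw [Set.not_nonempty_iff_eq_empty] at h2
      have hQe := hQempty M₂.1 M₂.2 h2
      obtain ⟨w, hw⟩ := h1
      exact absurd (M₁.2.1 hw) (by rw [hQe]; exact Set.notMem_empty w)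
  · by_cases h2 : M₂.1.Nonempty
    · exfalso
      rw [Set.not_nonempty_iff_eq_empty] at h1
      have hQe := hQempty M₁.1 M₁.2 h1
      obtain ⟨w, hw⟩ := h2
      exact absurd (M₂.2.1 hw) (by rw [hQe]; exact Set.notMem_empty w)
    · rw [Set.not_nonempty_iff_eq_empty] at h1 h2
      exact Subtype.ext (h1.trans h2.symm)

end Forward

section Pack

/-- The `D`-pattern at the level of vertices. -/
def DSeed (G : SimpleGraph V) (red : V → Prop) : Prop :=
  ∃ a b c d : V, red a ∧ red b ∧ ¬ red c ∧ ¬ red d ∧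
    G.Adj a b ∧ G.Adj c d ∧ G.Adj a c ∧ G.Adj a d ∧ G.Adj b c ∧ ¬ G.Adj b d

/-- The `D̃`-pattern at the level of vertices. -/
def DtSeed (G : SimpleGraph V) (red : V → Prop) : Prop :=
  ∃ a b c d : V, red a ∧ red b ∧ ¬ red c ∧ ¬ red d ∧
    G.Adj a b ∧ G.Adj c d ∧ ¬ G.Adj a c ∧ ¬ G.Adj a d ∧ G.Adj b d ∧ ¬ G.Adj b c

/-- All the hypotheses on `(G, red)` needed for the backward direction. -/
structure Pack (G : SimpleGraph V) (red : V → Prop) : Prop where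
  uh : Ultrahomogeneous G red
  uocR : IsUnionOfCliques G {v | red v}
  uocB : IsUnionOfCliques G {v | ¬ red v}
  pw : ∀ MR MB : Set V, IsMaxCliqueIn G {v | red v} MR → IsMaxCliqueIn G {v | ¬ red v} MB →
      Ultrahomogeneous (G.induce (MR ∪ MB)) (fun x => red x.1)
  dseed : DSeed G red
  dtseed : DtSeed G red

lemma ultrahomogeneous_not {V' : Type} {G' : SimpleGraph V'} {c : V' → Prop}
    (h : Ultrahomogeneous G' c) : Ultrahomogeneous G' (fun v => ¬ c v) := by
  intro S hS f hpi
  obtain ⟨hinj, hcol, hadj⟩ := hpi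
  obtain ⟨ψ, hψc, hψext⟩ := h S hS f ⟨hinj, fun v hv => not_iff_not.mp (hcol v hv), hadj⟩
  exact ⟨ψ, fun v => not_iff_not.mpr (hψc v), hψext⟩

lemma uh_induce_congr {c : V → Prop} {s t : Set V} (hst : s = t)
    (h : Ultrahomogeneous (G.induce s) (fun x => c x.1)) :
    Ultrahomogeneous (G.induce t) (fun x => c x.1) := by
  subst hst; exact h

lemma not_not_set (red : V → Prop) : {v : V | ¬ ¬ red v} = {v | red v} :=
  Set.ext fun _ => not_not

lemma Pack.swap {red : V → Prop} (P : Pack G red) : Pack G (fun v => ¬ red v) := by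
  constructor
  · exact ultrahomogeneous_not P.uh
  · exact P.uocB
  · intro u hu v hv w hw h1 h2 hne
    exact P.uocR u (not_not.mp hu) v (not_not.mp hv) w (not_not.mp hw) h1 h2 hne
  · intro MR MB hMR hMB
    have hMB' : IsMaxCliqueIn G {v | red v} MB := by
      rwa [not_not_set red] at hMB
    have h0 := P.pw MB MR hMB' hMR
    exact uh_induce_congr (c := fun v => ¬ red v) (Set.union_comm MB MR) (ultrahomogeneous_not h0)
  · obtain ⟨a, b, c, d, ha, hb, hc, hd, hab, hcd, hac, had, hbc, hbd⟩ := P.dseed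
    exact ⟨c, d, a, b, hc, hd, not_not_intro ha, not_not_intro hb, hcd, hab,
      hac.symm, hbc.symm, had.symm, fun h => hbd h.symm⟩
  · obtain ⟨a, b, c, d, ha, hb, hc, hd, hab, hcd, hac, had, hbd, hbc⟩ := P.dtseed
    exact ⟨c, d, a, b, hc, hd, not_not_intro ha, not_not_intro hb, hcd, hab,
      fun h => hac (h.symm), fun h => hbc (h.symm), hbd.symm, fun h => had (h.symm)⟩

lemma dseed_of_realizes {red : V → Prop} (hD : Realizes G red Dgraph Dred) : DSeed G red := by
  obtain ⟨f, hfinj, hfcol, hfadj⟩ := hD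
  refine ⟨f 0, f 1, f 2, f 3, ?_, ?_, ?_, ?_, ?_, ?_, ?_, ?_, ?_, ?_⟩
  · exact (hfcol 0).mpr (by simp [Dred])
  · exact (hfcol 1).mpr (by simp [Dred])
  · intro h; exact absurd ((hfcol 2).mp h) (by simp [Dred])
  · intro h; exact absurd ((hfcol 3).mp h) (by simp [Dred])
  · exact (hfadj 0 1).mpr (by rw [Dgraph, SimpleGraph.fromRel_adj]; decide)
  · exact (hfadj 2 3).mpr (by rw [Dgraph, SimpleGraph.fromRel_adj]; decide)
  · exact (hfadj 0 2).mpr (by rw [Dgraph, SimpleGraph.fromRel_adj]; decide)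
  · exact (hfadj 0 3).mpr (by rw [Dgraph, SimpleGraph.fromRel_adj]; decide)
  · exact (hfadj 1 2).mpr (by rw [Dgraph, SimpleGraph.fromRel_adj]; decide)
  · intro h
    have := (hfadj 1 3).mp h
    rw [Dgraph, SimpleGraph.fromRel_adj] at this
    exact absurd this (by decide)

lemma dtseed_of_realizes {red : V → Prop} (hDt : Realizes G red Dtilde Dred) : DtSeed G red := by
  obtain ⟨f, hfinj, hfcol, hfadj⟩ := hDt
  refine ⟨f 0, f 1, f 2, f 3, ?_, ?_, ?_, ?_, ?_, ?_, ?_, ?_, ?_, ?_⟩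
  · exact (hfcol 0).mpr (by simp [Dred])
  · exact (hfcol 1).mpr (by simp [Dred])
  · intro h; exact absurd ((hfcol 2).mp h) (by simp [Dred])
  · intro h; exact absurd ((hfcol 3).mp h) (by simp [Dred])
  · exact (hfadj 0 1).mpr (by rw [Dtilde, SimpleGraph.fromRel_adj]; decide)
  · exact (hfadj 2 3).mpr (by rw [Dtilde, SimpleGraph.fromRel_adj]; decide)
  · intro h
    have := (hfadj 0 2).mp h
    rw [Dtilde, SimpleGraph.fromRel_adj] at this
    exact absurd this (by decide)
  · intro h
    have := (hfadj 0 3).mp h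
    rw [Dtilde, SimpleGraph.fromRel_adj] at this
    exact absurd this (by decide)
  · exact (hfadj 1 3).mpr (by rw [Dtilde, SimpleGraph.fromRel_adj]; decide)
  · intro h
    have := (hfadj 1 2).mp h
    rw [Dtilde, SimpleGraph.fromRel_adj] at this
    exact absurd this (by decide)

end Pack

section Backward

variable {red : V → Prop}

/-- Transport a partial isomorphism defined on two cross vertices to a global automorphism. -/
lemma pair_transport (P : Pack G red) {u₀ v₀ x y : V}
    (hu₀ : red u₀) (hv₀ : ¬ red v₀) (hx : red x) (hy : ¬ red y)
    (hadj : G.Adj x y ↔ G.Adj u₀ v₀) :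
    ∃ ψ : G ≃g G, (∀ v, red (ψ v) ↔ red v) ∧ ψ u₀ = x ∧ ψ v₀ = y := by
  classical
  have huv : u₀ ≠ v₀ := fun h => hv₀ (h ▸ hu₀)
  have hxy : x ≠ y := fun h => hy (h ▸ hx)
  set g : V → V := fun v => if v = u₀ then x else if v = v₀ then y else v with hg
  have hgu : g u₀ = x := by simp [hg]
  have hgv : g v₀ = y := by simp [hg, huv.symm]
  have hSfin : (({u₀, v₀} : Set V)).Finite := (Set.finite_singleton v₀).insert u₀
  have hpi : IsPartialIso G red {u₀, v₀} g := by
    refine ⟨?_, ?_, ?_⟩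
    · intro a ha b hb hab
      rcases ha with rfl | ha <;> rcases hb with rfl | hb
      · rfl
      · rw [Set.mem_singleton_iff] at hb; subst hb
        rw [hgu, hgv] at hab; exact absurd hab hxy
      · rw [Set.mem_singleton_iff] at ha; subst ha
        rw [hgu, hgv] at hab; exact absurd hab.symm hxy
      · rw [Set.mem_singleton_iff] at ha hb; rw [ha, hb]
    · intro v hv
      rcases hv with rfl | hv
      · rw [hgu]; exact iff_of_true hx hu₀
      · rw [Set.mem_singleton_iff] at hv; subst hv
        rw [hgv]; exact iff_of_false hy hv₀
    · intro a ha b hb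
      rcases ha with rfl | ha <;> rcases hb with rfl | hb
      · rw [hgu]; exact iff_of_false (G.irrefl) (G.irrefl)
      · rw [Set.mem_singleton_iff] at hb; subst hb
        rw [hgu, hgv]; exact hadj
      · rw [Set.mem_singleton_iff] at ha; subst ha
        rw [hgu, hgv]
        constructor
        · intro h; exact ((hadj.mp h.symm).symm)
        · intro h; exact ((hadj.mpr h.symm).symm)
      · rw [Set.mem_singleton_iff] at ha hb; rw [ha, hb]
        exact iff_of_false (G.irrefl) (G.irrefl)
  obtain ⟨ψ, hψc, hψext⟩ := P.uh {u₀, v₀} hSfin g hpi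
  refine ⟨ψ, hψc, ?_, ?_⟩
  · rw [hψext u₀ (Set.mem_insert _ _), hgu]
  · rw [hψext v₀ (Set.mem_insert_of_mem _ rfl), hgv]

/-- STAGE 0: every pair of maximal cliques carries a `D`-pattern and a `D̃`-pattern. -/
lemma stage0 (P : Pack G red) {M N : Set V}
    (hM : IsMaxCliqueIn G {v | red v} M) (hN : IsMaxCliqueIn G {v | ¬ red v} N) :
    (∃ a ∈ M, ∃ b ∈ M, ∃ c ∈ N, ∃ d ∈ N,
      G.Adj a b ∧ G.Adj c d ∧ G.Adj a c ∧ G.Adj a d ∧ G.Adj b c ∧ ¬ G.Adj b d) ∧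
    (∃ a ∈ M, ∃ b ∈ M, ∃ c ∈ N, ∃ d ∈ N,
      G.Adj a b ∧ G.Adj c d ∧ ¬ G.Adj a c ∧ ¬ G.Adj a d ∧ G.Adj b d ∧ ¬ G.Adj b c) := by
  obtain ⟨a, b, c, d, ha, hb, hc, hd, hab, hcd, hac, had, hbc, hbd⟩ := P.dseed
  obtain ⟨a', b', c', d', ha', hb', hc', hd', hab', hcd', hac', had', hbd', hbc'⟩ := P.dtseed
  have hMred : ∀ z ∈ M, red z := fun z hz => hM.1 hz
  have hNblue : ∀ z ∈ N, ¬ red z := fun z hz => hN.1 hz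
  obtain ⟨x₀, hx₀⟩ := maxclique_nonempty ⟨a, ha⟩ hM
  obtain ⟨y₀, hy₀⟩ := maxclique_nonempty (⟨c, hc⟩ : Set.Nonempty {v | ¬ red v}) hN
  have hx₀r : red x₀ := hMred _ hx₀
  have hy₀b : ¬ red y₀ := hNblue _ hy₀
  by_cases hxy : G.Adj x₀ y₀
  · obtain ⟨ψ, hψc, hψa, hψb⟩ := pair_transport P ha hc hx₀r hy₀b (iff_of_true hxy hac)
    obtain ⟨φ, hφc, hφa, hφb⟩ := pair_transport P hb' hd' hx₀r hy₀b (iff_of_true hxy hbd')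
    constructor
    · refine ⟨ψ a, by rw [hψa]; exact hx₀, ψ b, ?_, ψ c, by rw [hψb]; exact hy₀, ψ d, ?_,
        ?_, ?_, ?_, ?_, ?_, ?_⟩
      · exact mem_maxclique_of_adj P.uocR hM (show ψ a ∈ M by rw [hψa]; exact hx₀)
          (show ψ b ∈ {v | red v} from (hψc b).mpr hb)
          (show G.Adj (ψ a) (ψ b) from ψ.map_adj_iff.mpr hab)
      · exact mem_maxclique_of_adj P.uocB hN (show ψ c ∈ N by rw [hψb]; exact hy₀)
          (show ψ d ∈ {v | ¬ red v} from (fun h => hd ((hψc d).mp h)))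
          (show G.Adj (ψ c) (ψ d) from ψ.map_adj_iff.mpr hcd)
      · exact ψ.map_adj_iff.mpr hab
      · exact ψ.map_adj_iff.mpr hcd
      · exact ψ.map_adj_iff.mpr hac
      · exact ψ.map_adj_iff.mpr had
      · exact ψ.map_adj_iff.mpr hbc
      · exact fun h => hbd (ψ.map_adj_iff.mp h)
    · refine ⟨φ a', ?_, φ b', by rw [hφa]; exact hx₀, φ c', ?_, φ d', by rw [hφb]; exact hy₀,
        ?_, ?_, ?_, ?_, ?_, ?_⟩
      · exact mem_maxclique_of_adj P.uocR hM (show φ b' ∈ M by rw [hφa]; exact hx₀)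
          (show φ a' ∈ {v | red v} from (hφc a').mpr ha')
          (show G.Adj (φ b') (φ a') from φ.map_adj_iff.mpr hab'.symm)
      · exact mem_maxclique_of_adj P.uocB hN (show φ d' ∈ N by rw [hφb]; exact hy₀)
          (show φ c' ∈ {v | ¬ red v} from (fun h => hc' ((hφc c').mp h)))
          (show G.Adj (φ d') (φ c') from φ.map_adj_iff.mpr hcd'.symm)
      · exact φ.map_adj_iff.mpr hab'
      · exact φ.map_adj_iff.mpr hcd'
      · exact fun h => hac' (φ.map_adj_iff.mp h)
      · exact fun h => had' (φ.map_adj_iff.mp h)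
      · exact φ.map_adj_iff.mpr hbd'
      · exact fun h => hbc' (φ.map_adj_iff.mp h)
  · obtain ⟨ψ, hψc, hψa, hψb⟩ := pair_transport P hb hd hx₀r hy₀b (iff_of_false hxy hbd)
    obtain ⟨φ, hφc, hφa, hφb⟩ := pair_transport P ha' hc' hx₀r hy₀b (iff_of_false hxy hac')
    constructor
    · refine ⟨ψ a, ?_, ψ b, by rw [hψa]; exact hx₀, ψ c, ?_, ψ d, by rw [hψb]; exact hy₀,
        ?_, ?_, ?_, ?_, ?_, ?_⟩
      · exact mem_maxclique_of_adj P.uocR hM (show ψ b ∈ M by rw [hψa]; exact hx₀)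
          (show ψ a ∈ {v | red v} from (hψc a).mpr ha)
          (show G.Adj (ψ b) (ψ a) from ψ.map_adj_iff.mpr hab.symm)
      · exact mem_maxclique_of_adj P.uocB hN (show ψ d ∈ N by rw [hψb]; exact hy₀)
          (show ψ c ∈ {v | ¬ red v} from (fun h => hc ((hψc c).mp h)))
          (show G.Adj (ψ d) (ψ c) from ψ.map_adj_iff.mpr hcd.symm)
      · exact ψ.map_adj_iff.mpr hab
      · exact ψ.map_adj_iff.mpr hcd
      · exact ψ.map_adj_iff.mpr hac
      · exact ψ.map_adj_iff.mpr had
      · exact ψ.map_adj_iff.mpr hbc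
      · exact fun h => hbd (ψ.map_adj_iff.mp h)
    · refine ⟨φ a', by rw [hφa]; exact hx₀, φ b', ?_, φ c', by rw [hφb]; exact hy₀, φ d', ?_,
        ?_, ?_, ?_, ?_, ?_, ?_⟩
      · exact mem_maxclique_of_adj P.uocR hM (show φ a' ∈ M by rw [hφa]; exact hx₀)
          (show φ b' ∈ {v | red v} from (hφc b').mpr hb')
          (show G.Adj (φ a') (φ b') from φ.map_adj_iff.mpr hab')
      · exact mem_maxclique_of_adj P.uocB hN (show φ c' ∈ N by rw [hφb]; exact hy₀)
          (show φ d' ∈ {v | ¬ red v} from (fun h => hd' ((hφc d').mp h)))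
          (show G.Adj (φ c') (φ d') from φ.map_adj_iff.mpr hcd')
      · exact φ.map_adj_iff.mpr hab'
      · exact φ.map_adj_iff.mpr hcd'
      · exact fun h => hac' (φ.map_adj_iff.mp h)
      · exact fun h => had' (φ.map_adj_iff.mp h)
      · exact φ.map_adj_iff.mpr hbd'
      · exact fun h => hbc' (φ.map_adj_iff.mp h)

/-- Transport inside a piece, from piecewise ultrahomogeneity. -/
lemma piece_transport (P : Pack G red) {M N : Set V}
    (hM : IsMaxCliqueIn G {v | red v} M) (hN : IsMaxCliqueIn G {v | ¬ red v} N)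
    (S : Finset V) (hS : ↑S ⊆ M ∪ N) (g : V → V) (hinj : Set.InjOn g ↑S)
    (hgM : ∀ v ∈ S, v ∈ M → g v ∈ M) (hgN : ∀ v ∈ S, v ∈ N → g v ∈ N)
    (hgadj : ∀ u ∈ S, ∀ v ∈ S, (G.Adj (g u) (g v) ↔ G.Adj u v)) :
    ∃ Φ Φ' : V → V, (∀ v ∈ S, Φ v = g v) ∧ (∀ v ∈ M, Φ v ∈ M) ∧ (∀ v ∈ N, Φ v ∈ N) ∧
      (∀ v ∈ M, Φ' v ∈ M) ∧ (∀ v ∈ N, Φ' v ∈ N) ∧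
      (∀ u ∈ M ∪ N, ∀ v ∈ M ∪ N, (G.Adj (Φ u) (Φ v) ↔ G.Adj u v)) ∧
      (∀ v ∈ M ∪ N, Φ (Φ' v) = v) ∧ (∀ v ∈ M ∪ N, Φ' (Φ v) = v) := by
  classical
  have hUHp := P.pw M N hM hN
  set U : Set V := M ∪ N with hU
  have hMU : M ⊆ U := Set.subset_union_left
  have hNU : N ⊆ U := Set.subset_union_right
  have hMred : ∀ z ∈ M, red z := fun z hz => hM.1 hz
  have hNblue : ∀ z ∈ N, ¬ red z := fun z hz => hN.1 hz
  have hredM : ∀ z ∈ U, red z → z ∈ M := by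
    intro z hz hr
    rcases hz with h | h
    · exact h
    · exact absurd hr (hNblue z h)
  have hblueN : ∀ z ∈ U, ¬ red z → z ∈ N := by
    intro z hz hr
    rcases hz with h | h
    · exact absurd (hMred z h) hr
    · exact h
  have hgU : ∀ v (hv : v ∈ S), v ∈ U → g v ∈ U := by
    intro v hv hvU
    rcases hvU with h | h
    · exact hMU (hgM v hv h)
    · exact hNU (hgN v hv h)
  set ghat : ↥U → ↥U := fun v =>
    if hv : (v : V) ∈ S then ⟨g v, hgU v hv v.2⟩ else v with hghat
  set Shat : Set ↥U := Subtype.val ⁻¹' ↑S with hShat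
  have hShatfin : Shat.Finite := S.finite_toSet.preimage (Subtype.val_injective.injOn)
  have hghatval : ∀ (v : ↥U), (v : V) ∈ S → (ghat v : V) = g v := by
    intro v hv
    simp [hghat, dif_pos hv]
  have hpi : IsPartialIso (G.induce U) (fun x => red x.1) Shat ghat := by
    refine ⟨?_, ?_, ?_⟩
    · intro u hu v hv heq
      have : (ghat u : V) = (ghat v : V) := congrArg Subtype.val heq
      rw [hghatval u hu, hghatval v hv] at this
      exact Subtype.ext (hinj hu hv this)
    · intro v hv
      show red (ghat v : V) ↔ red (v : V)
      rw [hghatval v hv]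
      by_cases hvM : (v : V) ∈ M
      · exact iff_of_true (hMred _ (hgM v hv hvM)) (hMred _ hvM)
      · have hvN : (v : V) ∈ N := by
          rcases v.2 with h | h
          · exact absurd h hvM
          · exact h
        exact iff_of_false (hNblue _ (hgN v hv hvN)) (hNblue _ hvN)
    · intro u hu v hv
      show G.Adj (ghat u : V) (ghat v : V) ↔ G.Adj (u : V) (v : V)
      rw [hghatval u hu, hghatval v hv]
      exact hgadj u hu v hv
  obtain ⟨ψ, hψred, hψext⟩ := hUHp Shat hShatfin ghat hpi
  have hψred' : ∀ x : ↥U, red ((ψ.symm x : ↥U) : V) ↔ red (x : V) := by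
    intro x
    have h1 := hψred (ψ.symm x)
    rw [ψ.apply_symm_apply] at h1
    exact h1.symm
  set Φ : V → V := fun v => if h : v ∈ U then (ψ ⟨v, h⟩ : V) else v with hΦ
  set Φ' : V → V := fun v => if h : v ∈ U then (ψ.symm ⟨v, h⟩ : V) else v with hΦ'
  have hΦval : ∀ v (h : v ∈ U), Φ v = (ψ ⟨v, h⟩ : V) := by
    intro v h; simp [hΦ, dif_pos h]
  have hΦ'val : ∀ v (h : v ∈ U), Φ' v = (ψ.symm ⟨v, h⟩ : V) := by
    intro v h; simp [hΦ', dif_pos h]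
  refine ⟨Φ, Φ', ?_, ?_, ?_, ?_, ?_, ?_, ?_, ?_⟩
  · intro v hv
    rw [hΦval v (hS hv), hψext ⟨v, hS hv⟩ (by exact hv), hghatval _ hv]
  · intro v hv
    rw [hΦval v (hMU hv)]
    exact hredM _ (ψ ⟨v, hMU hv⟩).2 ((hψred ⟨v, hMU hv⟩).mpr (hMred v hv))
  · intro v hv
    rw [hΦval v (hNU hv)]
    exact hblueN _ (ψ ⟨v, hNU hv⟩).2 (fun h => (hNblue v hv) ((hψred ⟨v, hNU hv⟩).mp h))
  · intro v hv
    rw [hΦ'val v (hMU hv)]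
    exact hredM _ (ψ.symm ⟨v, hMU hv⟩).2 ((hψred' ⟨v, hMU hv⟩).mpr (hMred v hv))
  · intro v hv
    rw [hΦ'val v (hNU hv)]
    exact hblueN _ (ψ.symm ⟨v, hNU hv⟩).2 (fun h => (hNblue v hv) ((hψred' ⟨v, hNU hv⟩).mp h))
  · intro u hu v hv
    rw [hΦval u hu, hΦval v hv]
    exact ψ.map_adj_iff (v := ⟨u, hu⟩) (w := ⟨v, hv⟩)
  · intro v hv
    rw [hΦ'val v hv]
    have hmem : (ψ.symm ⟨v, hv⟩ : V) ∈ U := (ψ.symm ⟨v, hv⟩).2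
    rw [hΦval _ hmem]
    have : (⟨(ψ.symm ⟨v, hv⟩ : V), hmem⟩ : ↥U) = ψ.symm ⟨v, hv⟩ := Subtype.ext rfl
    rw [this, ψ.apply_symm_apply]
  · intro v hv
    rw [hΦval v hv]
    have hmem : (ψ ⟨v, hv⟩ : V) ∈ U := (ψ ⟨v, hv⟩).2
    rw [hΦ'val _ hmem]
    have : (⟨(ψ ⟨v, hv⟩ : V), hmem⟩ : ↥U) = ψ ⟨v, hv⟩ := Subtype.ext rfl
    rw [this, ψ.symm_apply_apply]

/-- STAGE 1 induction step (works for both orientations of a piece `(X, Y)`). -/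
lemma oneStep (X Y : Set V)
    (hXcl : ∀ x ∈ X, ∀ y ∈ X, x ≠ y → G.Adj x y)
    (hYcl : ∀ x ∈ Y, ∀ y ∈ Y, x ≠ y → G.Adj x y)
    (hdisj : ∀ x ∈ X, x ∉ Y)
    (hS1 : ∃ x ∈ X, ∃ y ∈ Y, G.Adj x y)
    (hS2 : ∃ x ∈ X, ∃ y ∈ Y, ¬ G.Adj x y)
    (hS3 : ∃ x ∈ X, ∃ c ∈ Y, ∃ d ∈ Y, G.Adj c d ∧ G.Adj x c ∧ G.Adj x d)
    (hS4 : ∃ x ∈ X, ∃ c ∈ Y, ∃ d ∈ Y, G.Adj c d ∧ ¬ G.Adj x c ∧ ¬ G.Adj x d)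
    (htrans : ∀ S : Finset V, ↑S ⊆ X ∪ Y → ∀ g : V → V, Set.InjOn g ↑S →
      (∀ v ∈ S, v ∈ X → g v ∈ X) → (∀ v ∈ S, v ∈ Y → g v ∈ Y) →
      (∀ u ∈ S, ∀ v ∈ S, (G.Adj (g u) (g v) ↔ G.Adj u v)) →
      ∃ Φ Φ' : V → V, (∀ v ∈ S, Φ v = g v) ∧ (∀ v ∈ X, Φ v ∈ X) ∧ (∀ v ∈ Y, Φ v ∈ Y) ∧
        (∀ v ∈ X, Φ' v ∈ X) ∧ (∀ v ∈ Y, Φ' v ∈ Y) ∧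
        (∀ u ∈ X ∪ Y, ∀ v ∈ X ∪ Y, (G.Adj (Φ u) (Φ v) ↔ G.Adj u v)) ∧
        (∀ v ∈ X ∪ Y, Φ (Φ' v) = v) ∧ (∀ v ∈ X ∪ Y, Φ' (Φ v) = v))
    (n : ℕ)
    (IHr : ∀ C : Finset V, ↑C ⊆ Y → C.card ≤ n → ∀ q : V → Prop,
      ∃ x ∈ X, ∀ c ∈ C, (G.Adj x c ↔ q c))
    (IHb : ∀ E : Finset V, ↑E ⊆ X → E.card ≤ n → ∀ q : V → Prop,
      ∃ y ∈ Y, ∀ e ∈ E, (G.Adj y e ↔ q e))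
    (C : Finset V) (hCY : ↑C ⊆ Y) (hCcard : C.card = n + 1) (q : V → Prop) :
    ∃ x ∈ X, ∀ c ∈ C, (G.Adj x c ↔ q c) := by
  classical
  by_contra hmiss
  set Cpos : Finset V := C.filter q with hCposdef
  set Cneg : Finset V := C.filter (fun c => ¬ q c) with hCnegdef
  have hCposY : ↑Cpos ⊆ Y := fun z hz => hCY (Finset.mem_coe.mpr (Finset.mem_of_mem_filter z hz))
  have hCnegY : ↑Cneg ⊆ Y := fun z hz => hCY (Finset.mem_coe.mpr (Finset.mem_of_mem_filter z hz))
  have hCsplit : ∀ c ∈ C, c ∈ Cpos ∨ c ∈ Cneg := by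
    intro c hc
    by_cases hq : q c
    · exact Or.inl (Finset.mem_filter.mpr ⟨hc, hq⟩)
    · exact Or.inr (Finset.mem_filter.mpr ⟨hc, hq⟩)
  have hposq : ∀ c ∈ Cpos, q c := fun c hc => (Finset.mem_filter.mp hc).2
  have hnegq : ∀ c ∈ Cneg, ¬ q c := fun c hc => (Finset.mem_filter.mp hc).2
  have hdisjpn : Disjoint Cpos Cneg := by
    rw [Finset.disjoint_left]
    intro c h1 h2
    exact (Finset.mem_filter.mp h2).2 (Finset.mem_filter.mp h1).2
  have hcardpn : Cpos.card + Cneg.card = n + 1 := by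
    rw [hCposdef, hCnegdef, Finset.card_filter_add_card_filter_not, hCcard]
  -- T1 : placement invariance of the missing pattern
  have T1 : ∀ A B : Finset V, ↑A ⊆ Y → ↑B ⊆ Y → Disjoint A B →
      A.card = Cpos.card → B.card = Cneg.card →
      ∀ x ∈ X, (∀ α ∈ A, G.Adj x α) → (∀ β ∈ B, ¬ G.Adj x β) → False := by
    intro A B hAY hBY hABdisj hAcard hBcard x hxX hxA hxB
    have e1 : {c // c ∈ Cpos} ≃ {c // c ∈ A} := Finset.equivOfCardEq hAcard.symm
    have e2 : {c // c ∈ Cneg} ≃ {c // c ∈ B} := Finset.equivOfCardEq hBcard.symm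
    set g : V → V := fun v => if h : v ∈ Cpos then (e1 ⟨v, h⟩ : V) else
      if h : v ∈ Cneg then (e2 ⟨v, h⟩ : V) else v with hgdef
    have hgpos : ∀ v (h : v ∈ Cpos), g v = (e1 ⟨v, h⟩ : V) := by
      intro v h
      show (if h' : v ∈ Cpos then (e1 ⟨v, h'⟩ : V) else
        if h' : v ∈ Cneg then (e2 ⟨v, h'⟩ : V) else v) = (e1 ⟨v, h⟩ : V)
      rw [dif_pos h]
    have hgneg : ∀ v (h : v ∈ Cneg), g v = (e2 ⟨v, h⟩ : V) := by
      intro v h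
      show (if h' : v ∈ Cpos then (e1 ⟨v, h'⟩ : V) else
        if h' : v ∈ Cneg then (e2 ⟨v, h'⟩ : V) else v) = (e2 ⟨v, h⟩ : V)
      rw [dif_neg (Finset.disjoint_right.mp hdisjpn h), dif_pos h]
    have hgA : ∀ v (h : v ∈ Cpos), g v ∈ A := by
      intro v h
      rw [hgpos v h]
      exact (e1 ⟨v, h⟩).2
    have hgB : ∀ v (h : v ∈ Cneg), g v ∈ B := by
      intro v h
      rw [hgneg v h]
      exact (e2 ⟨v, h⟩).2
    have hgY : ∀ v ∈ C, g v ∈ Y := by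
      intro v hv
      rcases hCsplit v hv with h | h
      · exact hAY (hgA v h)
      · exact hBY (hgB v h)
    have hginj : Set.InjOn g ↑C := by
      intro u hu v hv heq
      rcases hCsplit u (Finset.mem_coe.mp hu) with hu' | hu' <;>
        rcases hCsplit v (Finset.mem_coe.mp hv) with hv' | hv'
      · rw [hgpos u hu', hgpos v hv'] at heq
        have := e1.injective (Subtype.ext heq)
        exact congrArg Subtype.val this
      · exfalso
        rw [hgpos u hu', hgneg v hv'] at heq
        have h1 : (e1 ⟨u, hu'⟩ : V) ∈ A := (e1 ⟨u, hu'⟩).2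
        have h2 : (e1 ⟨u, hu'⟩ : V) ∈ B := heq ▸ (e2 ⟨v, hv'⟩).2
        exact Finset.disjoint_left.mp hABdisj h1 h2
      · exfalso
        rw [hgneg u hu', hgpos v hv'] at heq
        have h1 : (e2 ⟨u, hu'⟩ : V) ∈ B := (e2 ⟨u, hu'⟩).2
        have h2 : (e2 ⟨u, hu'⟩ : V) ∈ A := heq ▸ (e1 ⟨v, hv'⟩).2
        exact Finset.disjoint_left.mp hABdisj h2 h1
      · rw [hgneg u hu', hgneg v hv'] at heq
        have := e2.injective (Subtype.ext heq)
        exact congrArg Subtype.val this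
    have hgadj : ∀ u ∈ C, ∀ v ∈ C, (G.Adj (g u) (g v) ↔ G.Adj u v) := by
      intro u hu v hv
      by_cases huv : u = v
      · subst huv
        exact iff_of_false (G.irrefl) (G.irrefl)
      · have h1 : G.Adj u v := hYcl u (hCY hu) v (hCY hv) huv
        have h2 : g u ≠ g v := fun h => huv (hginj (Finset.mem_coe.mpr hu) (Finset.mem_coe.mpr hv) h)
        exact iff_of_true (hYcl (g u) (hgY u hu) (g v) (hgY v hv) h2) h1
    obtain ⟨Φ, Φ', hext, hΦX, hΦY, hΦ'X, hΦ'Y, hΦadj, hΦΦ', hΦ'Φ⟩ :=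
      htrans C (fun z hz => Set.mem_union_right _ (hCY hz)) g hginj
        (fun v hv hvX => absurd (hCY hv) ((fun _ => hdisj v hvX) hv))
        (fun v hv _ => hgY v (Finset.mem_coe.mp hv))
        (fun u hu v hv => hgadj u (Finset.mem_coe.mp hu) v (Finset.mem_coe.mp hv))
    apply hmiss
    refine ⟨Φ' x, hΦ'X x hxX, ?_⟩
    intro c hc
    have hcY : c ∈ Y := hCY hc
    have h5 := hΦadj (Φ' x) (Set.mem_union_left _ (hΦ'X x hxX)) c (Set.mem_union_right _ hcY)
    rw [hΦΦ' x (Set.mem_union_left _ hxX), hext c (Finset.mem_coe.mpr hc)] at h5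
    rw [← h5]
    rcases hCsplit c hc with h | h
    · exact iff_of_true (hxA _ (hgA c h)) (hposq c h)
    · exact iff_of_false (hxB _ (hgB c h)) (hnegq c h)
  by_cases hapos : 0 < Cpos.card
  · by_cases hbpos : 0 < Cneg.card
    · -- main case: the z-trick
      have hzall : ∀ u ∈ Cpos, ∃ z ∈ X, (∀ α ∈ Cpos.erase u, G.Adj z α) ∧
          ∀ y ∈ Y, y ∉ Cpos.erase u → ¬ G.Adj z y := by
        intro u hu
        have hdisj' : Disjoint (Cpos.erase u) Cneg :=
          Finset.disjoint_of_subset_left (Finset.erase_subset u Cpos) hdisjpn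
        have hcard1 : (Cpos.erase u ∪ Cneg).card ≤ n := by
          rw [Finset.card_union_of_disjoint hdisj', Finset.card_erase_of_mem hu]
          omega
        have hsubY : ↑(Cpos.erase u ∪ Cneg) ⊆ Y := by
          intro z hz
          rcases Finset.mem_union.mp (Finset.mem_coe.mp hz) with h | h
          · exact hCposY (Finset.mem_of_mem_erase h)
          · exact hCnegY h
        obtain ⟨z, hzX, hzbits⟩ := IHr (Cpos.erase u ∪ Cneg) hsubY hcard1
          (fun v => v ∈ Cpos.erase u)
        refine ⟨z, hzX, ?_, ?_⟩
        · intro α hα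
          exact (hzbits α (Finset.mem_union_left _ hα)).mpr hα
        · intro y hy hynotin hadj'
          by_cases hyCneg : y ∈ Cneg
          · exact hynotin ((hzbits y (Finset.mem_union_right _ hyCneg)).mp hadj')
          · apply T1 (insert y (Cpos.erase u)) Cneg ?_ hCnegY ?_ ?_ rfl z hzX ?_ ?_
            · intro α hα
              rcases Finset.mem_insert.mp (Finset.mem_coe.mp hα) with rfl | h
              · exact hy
              · exact hCposY (Finset.mem_of_mem_erase h)
            · rw [Finset.disjoint_left]
              intro β h1 h2
              rcases Finset.mem_insert.mp h1 with rfl | h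
              · exact hyCneg h2
              · exact Finset.disjoint_left.mp hdisj' h h2
            · rw [Finset.card_insert_of_notMem hynotin, Finset.card_erase_of_mem hu]
              omega
            · intro α hα
              rcases Finset.mem_insert.mp hα with rfl | h
              · exact hadj'
              · exact (hzbits α (Finset.mem_union_left _ h)).mpr h
            · intro β hβ
              intro hadjβ
              have := (hzbits β (Finset.mem_union_right _ hβ)).mp hadjβ
              exact Finset.disjoint_left.mp hdisj' this hβ
      choose! zf hzfX hzfpos hzfneg using hzall
      set E := Cpos.image zf with hE
      have hEX : ↑E ⊆ X := by
        intro e he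
        obtain ⟨u, hu, rfl⟩ := Finset.mem_image.mp (Finset.mem_coe.mp he)
        exact hzfX u hu
      have hEcard : E.card ≤ n := by
        calc E.card ≤ Cpos.card := Finset.card_image_le
        _ ≤ n := by omega
      obtain ⟨chat, hchatY, hchatbits⟩ := IHb E hEX hEcard (fun _ => True)
      have hchatadj : ∀ u ∈ Cpos, G.Adj chat (zf u) :=
        fun u hu => (hchatbits (zf u) (Finset.mem_image_of_mem zf hu)).mpr trivial
      have hchatin : ∀ u ∈ Cpos, chat ∈ Cpos.erase u := by
        intro u hu
        by_contra hnot
        exact hzfneg u hu chat hchatY hnot ((hchatadj u hu).symm)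
      obtain ⟨u₀, hu₀⟩ := Finset.card_pos.mp hapos
      have hchatU : chat ∈ Cpos := Finset.mem_of_mem_erase (hchatin u₀ hu₀)
      exact absurd (hchatin chat hchatU) (Finset.notMem_erase chat Cpos)
    · -- all-positive missing pattern
      have hb0 : Cneg.card = 0 := by omega
      have ha : Cpos.card = n + 1 := by omega
      have hCemp : Cneg = ∅ := Finset.card_eq_zero.mp hb0
      have T1' : ∀ A : Finset V, ↑A ⊆ Y → A.card = n + 1 → ∀ x ∈ X,
          (∀ α ∈ A, G.Adj x α) → False := by
        intro A hAY hAcard x hxX hxA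
        exact T1 A ∅ hAY (by simp) (Finset.disjoint_empty_right _) (by rw [hAcard, ha])
          (by rw [hb0, Finset.card_empty]) x hxX hxA (by simp)
      by_cases hn0 : n = 0
      · obtain ⟨x, hxX, y, hyY, hadjxy⟩ := hS1
        apply T1' {y} (by simpa using hyY) (by rw [Finset.card_singleton, hn0]) x hxX
        intro α hα
        rw [Finset.mem_singleton.mp hα]
        exact hadjxy
      by_cases hn1 : n = 1
      · obtain ⟨x, hxX, c, hcY, d, hdY, hcd, hxc, hxd⟩ := hS3
        apply T1' {c, d} ?_ ?_ x hxX ?_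
        · intro z hz
          rcases Finset.mem_insert.mp (Finset.mem_coe.mp hz) with rfl | h
          · exact hcY
          · rw [Finset.mem_singleton.mp h]
            exact hdY
        · rw [Finset.card_insert_of_notMem (by simp [hcd.ne]), Finset.card_singleton, hn1]
        · intro α hα
          rcases Finset.mem_insert.mp hα with rfl | h
          · exact hxc
          · rw [Finset.mem_singleton.mp h]
            exact hxd
      have hn2 : 2 ≤ n := by omega
      have hW : ∀ Bf : Finset V, ↑Bf ⊆ Y → Bf.card = n →
          ∃ w' ∈ X, (∀ β ∈ Bf, G.Adj w' β) ∧ ∀ y ∈ Y, y ∉ Bf → ¬ G.Adj w' y := by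
        intro Bf hBfY hBfcard
        obtain ⟨w', hw'X, hw'bits⟩ := IHr Bf hBfY (le_of_eq hBfcard) (fun _ => True)
        refine ⟨w', hw'X, fun β hβ => (hw'bits β hβ).mpr trivial, ?_⟩
        intro y hy hynot hadj'
        apply T1' (insert y Bf) ?_ ?_ w' hw'X ?_
        · intro z hz
          rcases Finset.mem_insert.mp (Finset.mem_coe.mp hz) with rfl | h
          · exact hy
          · exact hBfY h
        · rw [Finset.card_insert_of_notMem hynot, hBfcard]
        · intro α hα
          rcases Finset.mem_insert.mp hα with rfl | h
          · exact hadj'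
          · exact (hw'bits α h).mpr trivial
      by_cases hdp : ∃ B₁ B₂ : Finset V, ↑B₁ ⊆ Y ∧ ↑B₂ ⊆ Y ∧ B₁.card = n ∧ B₂.card = n ∧
          Disjoint B₁ B₂
      · obtain ⟨B₁, B₂, hB₁Y, hB₂Y, hB₁c, hB₂c, hdisj12⟩ := hdp
        obtain ⟨β₀, hβ₀⟩ := Finset.card_pos.mp (show 0 < B₁.card by omega)
        obtain ⟨γ₀, hγ₀⟩ := Finset.card_pos.mp (show 0 < B₂.card by omega)
        have hγ₀notB₁ : γ₀ ∉ B₁ := Finset.disjoint_right.mp hdisj12 hγ₀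
        have hβ₀notB₂ : β₀ ∉ B₂ := Finset.disjoint_left.mp hdisj12 hβ₀
        set B₄ := insert γ₀ (B₁.erase β₀) with hB₄
        have hB₄card : B₄.card = n := by
          rw [hB₄, Finset.card_insert_of_notMem
            (fun h => hγ₀notB₁ (Finset.mem_of_mem_erase h)), Finset.card_erase_of_mem hβ₀]
          omega
        have hB₄Y : ↑B₄ ⊆ Y := by
          intro z hz
          rcases Finset.mem_insert.mp (Finset.mem_coe.mp hz) with rfl | h
          · exact hB₂Y hγ₀
          · exact hB₁Y (Finset.mem_of_mem_erase h)
        obtain ⟨w₁, hw₁X, hw₁pos, hw₁neg⟩ := hW B₁ hB₁Y hB₁c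
        obtain ⟨w₂, hw₂X, hw₂pos, hw₂neg⟩ := hW B₂ hB₂Y hB₂c
        obtain ⟨w₄, hw₄X, hw₄pos, hw₄neg⟩ := hW B₄ hB₄Y hB₄card
        have hne12 : w₁ ≠ w₂ :=
          fun h => (hw₂neg β₀ (hB₁Y hβ₀) hβ₀notB₂) (h ▸ hw₁pos β₀ hβ₀)
        have hne14 : w₁ ≠ w₄ :=
          fun h => (hw₁neg γ₀ (hB₂Y hγ₀) hγ₀notB₁)
            (h.symm ▸ hw₄pos γ₀ (Finset.mem_insert_self _ _))
        set g := fun v => if v = w₂ then w₄ else v with hgdef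
        have hgw₁ : g w₁ = w₁ := if_neg hne12
        have hgw₂ : g w₂ = w₄ := if_pos rfl
        have hmemS : ∀ v ∈ ({w₁, w₂} : Finset V), v ∈ X := by
          intro v hv
          rcases Finset.mem_insert.mp hv with rfl | h
          · exact hw₁X
          · rw [Finset.mem_singleton.mp h]
            exact hw₂X
        have hgX : ∀ v ∈ ({w₁, w₂} : Finset V), g v ∈ X := by
          intro v hv
          rcases Finset.mem_insert.mp hv with rfl | h
          · rw [hgw₁]; exact hw₁X
          · rw [Finset.mem_singleton.mp h, hgw₂]; exact hw₄X
        have hinj2 : Set.InjOn g ↑({w₁, w₂} : Finset V) := by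
          intro u hu v hv heq
          rcases Finset.mem_insert.mp (Finset.mem_coe.mp hu) with rfl | h <;>
            rcases Finset.mem_insert.mp (Finset.mem_coe.mp hv) with rfl | h'
          · rfl
          · rw [Finset.mem_singleton.mp h'] at heq ⊢
            rw [hgw₁, hgw₂] at heq
            exact absurd heq hne14
          · rw [Finset.mem_singleton.mp h] at heq ⊢
            rw [hgw₁, hgw₂] at heq
            exact absurd heq.symm hne14
          · rw [Finset.mem_singleton.mp h, Finset.mem_singleton.mp h']
        have hadjp : ∀ u ∈ ({w₁, w₂} : Finset V), ∀ v ∈ ({w₁, w₂} : Finset V),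
            (G.Adj (g u) (g v) ↔ G.Adj u v) := by
          intro u hu v hv
          rcases Finset.mem_insert.mp hu with rfl | h <;>
            rcases Finset.mem_insert.mp hv with rfl | h'
          · rw [hgw₁]
          · rw [Finset.mem_singleton.mp h', hgw₁, hgw₂]
            exact iff_of_true (hXcl _ hw₁X _ hw₄X hne14) (hXcl _ hw₁X _ hw₂X hne12)
          · rw [Finset.mem_singleton.mp h, hgw₁, hgw₂]
            exact iff_of_true (hXcl _ hw₄X _ hw₁X (Ne.symm hne14))
              (hXcl _ hw₂X _ hw₁X (Ne.symm hne12))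
          · rw [Finset.mem_singleton.mp h, Finset.mem_singleton.mp h', hgw₂]
            exact iff_of_false (G.irrefl) (G.irrefl)
        obtain ⟨Φ, Φ', hext, hΦX, hΦY, hΦ'X, hΦ'Y, hΦadj, hΦΦ', hΦ'Φ⟩ :=
          htrans {w₁, w₂} (fun z hz => Set.mem_union_left _ (hmemS z (Finset.mem_coe.mp hz)))
            g hinj2 (fun v hv _ => hgX v (Finset.mem_coe.mp hv))
            (fun v hv hvY => absurd hvY (hdisj v (hmemS v (Finset.mem_coe.mp hv))))
            (fun u hu v hv => hadjp u (Finset.mem_coe.mp hu) v (Finset.mem_coe.mp hv))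
        have hΦw₁ : Φ w₁ = w₁ := by
          rw [hext w₁ (by simp), hgw₁]
        have hΦw₂ : Φ w₂ = w₄ := by
          rw [hext w₂ (by simp), hgw₂]
        obtain ⟨δ, hδ⟩ := Finset.card_pos.mp
          (show 0 < (B₁.erase β₀).card by rw [Finset.card_erase_of_mem hβ₀]; omega)
        have hδB₁ : δ ∈ B₁ := Finset.mem_of_mem_erase hδ
        have hδB₄ : δ ∈ B₄ := Finset.mem_insert_of_mem hδ
        have hδY : δ ∈ Y := hB₁Y hδB₁
        set d' := Φ' δ with hd'
        have hd'Y : d' ∈ Y := hΦ'Y δ hδY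
        have hΦd' : Φ d' = δ := hΦΦ' δ (Set.mem_union_right _ hδY)
        have hadj2 : G.Adj w₂ d' ↔ G.Adj w₄ δ := by
          have h6 := hΦadj w₂ (Set.mem_union_left _ hw₂X) d' (Set.mem_union_right _ hd'Y)
          rw [hΦw₂, hΦd'] at h6
          exact h6.symm
        have hadj1 : G.Adj w₁ d' ↔ G.Adj w₁ δ := by
          have h6 := hΦadj w₁ (Set.mem_union_left _ hw₁X) d' (Set.mem_union_right _ hd'Y)
          rw [hΦw₁, hΦd'] at h6
          exact h6.symm
        have hd'B₂ : d' ∈ B₂ := by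
          by_contra hnot
          exact (hw₂neg d' hd'Y hnot) (hadj2.mpr (hw₄pos δ hδB₄))
        have hd'B₁ : d' ∈ B₁ := by
          by_contra hnot
          exact (hw₁neg d' hd'Y hnot) (hadj1.mpr (hw₁pos δ hδB₁))
        exact (Finset.disjoint_left.mp hdisj12 hd'B₁) hd'B₂
      · -- Y is small: covering trick
        have hYfin : Y.Finite := by
          by_contra hYinf
          have hYinf' : Y.Infinite := hYinf
          obtain ⟨t, htY, htcard⟩ := hYinf'.exists_subset_card_eq (2 * n)
          obtain ⟨B₁, hB₁t, hB₁c⟩ := Finset.exists_subset_card_eq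
            (show n ≤ t.card by omega)
          apply hdp
          refine ⟨B₁, t \ B₁, fun z hz => htY (hB₁t hz),
            fun z hz => htY (Finset.mem_sdiff.mp (Finset.mem_coe.mp hz)).1, hB₁c, ?_, ?_⟩
          · rw [Finset.card_sdiff_of_subset hB₁t, htcard, hB₁c]
            omega
          · exact Finset.disjoint_sdiff
        set Nf := hYfin.toFinset with hNf
        have hNfY : ↑Nf ⊆ Y := by
          intro z hz
          rw [hNf] at hz
          simpa using hz
        have hCNf : C ⊆ Nf := fun z hz => hYfin.mem_toFinset.mpr (hCY hz)
        have hNfcard : n + 1 ≤ Nf.card := hCcard ▸ Finset.card_le_card hCNf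
        obtain ⟨c₁, hc₁⟩ := Finset.card_pos.mp (show 0 < C.card by omega)
        set B₁ := C.erase c₁ with hB₁def
        have hB₁card : B₁.card = n := by
          rw [hB₁def, Finset.card_erase_of_mem hc₁, hCcard]
          omega
        have hB₁Y : ↑B₁ ⊆ Y := fun z hz => hCY (Finset.erase_subset c₁ C (Finset.mem_coe.mp hz))

        set R := Nf \ B₁ with hRdef
        have hRY : ↑R ⊆ Y := fun z hz => hNfY (Finset.mem_coe.mpr
          (Finset.mem_sdiff.mp (Finset.mem_coe.mp hz)).1)
        have hRcard : R.card ≤ n := by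
          by_contra hgt
          push_neg at hgt
          obtain ⟨B₂, hB₂R, hB₂c⟩ := Finset.exists_subset_card_eq (show n ≤ R.card by omega)
          apply hdp
          refine ⟨B₁, B₂, hB₁Y, fun z hz => hRY (hB₂R hz), hB₁card, hB₂c, ?_⟩
          rw [Finset.disjoint_right]
          intro z hz1 hz2
          exact (Finset.mem_sdiff.mp (hB₂R hz1)).2 hz2
        obtain ⟨Pd, hPdB₁, hPdcard⟩ := Finset.exists_subset_card_eq
          (show n - R.card ≤ B₁.card by omega)
        set B₂ := R ∪ Pd with hB₂def
        have hdisjRP : Disjoint R Pd := by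
          rw [Finset.disjoint_left]
          intro z hz1 hz2
          exact (Finset.mem_sdiff.mp hz1).2 (hPdB₁ hz2)
        have hB₂card : B₂.card = n := by
          rw [hB₂def, Finset.card_union_of_disjoint hdisjRP, hPdcard]
          omega
        have hB₂Y : ↑B₂ ⊆ Y := by
          intro z hz
          rcases Finset.mem_union.mp (Finset.mem_coe.mp hz) with h | h
          · exact hRY h
          · exact hB₁Y (hPdB₁ h)
        obtain ⟨w₁, hw₁X, hw₁pos, hw₁neg⟩ := hW B₁ hB₁Y hB₁card
        obtain ⟨w₂, hw₂X, hw₂pos, hw₂neg⟩ := hW B₂ hB₂Y hB₂card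
        have hEX : ↑({w₁, w₂} : Finset V) ⊆ X := by
          intro z hz
          rcases Finset.mem_insert.mp (Finset.mem_coe.mp hz) with rfl | h
          · exact hw₁X
          · rw [Finset.mem_singleton.mp h]
            exact hw₂X
        have hEcard : ({w₁, w₂} : Finset V).card ≤ n := by
          have h2 : ({w₁, w₂} : Finset V).card ≤ ({w₂} : Finset V).card + 1 :=
            Finset.card_insert_le w₁ {w₂}
          rw [Finset.card_singleton] at h2
          omega
        obtain ⟨chat, hchatY, hchatbits⟩ := IHb {w₁, w₂} hEX hEcard (fun _ => False)
        have h1 : ¬ G.Adj chat w₁ :=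
          fun h => (hchatbits w₁ (Finset.mem_insert_self _ _)).mp h
        have h2 : ¬ G.Adj chat w₂ :=
          fun h => (hchatbits w₂ (Finset.mem_insert_of_mem (Finset.mem_singleton_self _))).mp h
        have hchatNf : chat ∈ Nf := hYfin.mem_toFinset.mpr hchatY
        by_cases hchatB₁ : chat ∈ B₁
        · exact h1 ((hw₁pos chat hchatB₁).symm)
        · have hchatR : chat ∈ R := Finset.mem_sdiff.mpr ⟨hchatNf, hchatB₁⟩
          exact h2 ((hw₂pos chat (Finset.mem_union_left _ hchatR)).symm)
  · -- all-negative missing pattern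
    have ha0 : Cpos.card = 0 := by omega
    have hb : Cneg.card = n + 1 := by omega
    have T1'' : ∀ B : Finset V, ↑B ⊆ Y → B.card = n + 1 → ∀ x ∈ X,
        (∀ β ∈ B, ¬ G.Adj x β) → False := by
      intro B hBY hBcard x hxX hxB
      exact T1 ∅ B (by simp) hBY (Finset.disjoint_empty_left _)
        (by rw [ha0, Finset.card_empty]) (by rw [hBcard, hb]) x hxX (by simp) hxB
    by_cases hn0 : n = 0
    · obtain ⟨x, hxX, y, hyY, hnadjxy⟩ := hS2
      apply T1'' {y} (by simpa using hyY) (by rw [Finset.card_singleton, hn0]) x hxX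
      intro β hβ
      rw [Finset.mem_singleton.mp hβ]
      exact hnadjxy
    by_cases hn1 : n = 1
    · obtain ⟨x, hxX, c, hcY, d, hdY, hcd, hxc, hxd⟩ := hS4
      apply T1'' {c, d} ?_ ?_ x hxX ?_
      · intro z hz
        rcases Finset.mem_insert.mp (Finset.mem_coe.mp hz) with rfl | h
        · exact hcY
        · rw [Finset.mem_singleton.mp h]
          exact hdY
      · rw [Finset.card_insert_of_notMem (by simp [hcd.ne]), Finset.card_singleton, hn1]
      · intro β hβ
        rcases Finset.mem_insert.mp hβ with rfl | h
        · exact hxc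
        · rw [Finset.mem_singleton.mp h]
          exact hxd
    have hn2 : 2 ≤ n := by omega
    have hW : ∀ Bf : Finset V, ↑Bf ⊆ Y → Bf.card = n →
        ∃ w' ∈ X, (∀ β ∈ Bf, ¬ G.Adj w' β) ∧ ∀ y ∈ Y, y ∉ Bf → G.Adj w' y := by
      intro Bf hBfY hBfcard
      obtain ⟨w', hw'X, hw'bits⟩ := IHr Bf hBfY (le_of_eq hBfcard) (fun _ => False)
      refine ⟨w', hw'X, fun β hβ => fun h => (hw'bits β hβ).mp h, ?_⟩
      intro y hy hynot
      by_contra hnadj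
      apply T1'' (insert y Bf) ?_ ?_ w' hw'X ?_
      · intro z hz
        rcases Finset.mem_insert.mp (Finset.mem_coe.mp hz) with rfl | h
        · exact hy
        · exact hBfY h
      · rw [Finset.card_insert_of_notMem hynot, hBfcard]
      · intro β hβ
        rcases Finset.mem_insert.mp hβ with rfl | h
        · exact hnadj
        · exact fun hadj' => (hw'bits β h).mp hadj'
    by_cases hdp : ∃ B₁ B₂ : Finset V, ↑B₁ ⊆ Y ∧ ↑B₂ ⊆ Y ∧ B₁.card = n ∧ B₂.card = n ∧
        Disjoint B₁ B₂
    · obtain ⟨B₁, B₂, hB₁Y, hB₂Y, hB₁c, hB₂c, hdisj12⟩ := hdp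
      obtain ⟨β₀, hβ₀⟩ := Finset.card_pos.mp (show 0 < B₁.card by omega)
      obtain ⟨γ₀, hγ₀⟩ := Finset.card_pos.mp (show 0 < B₂.card by omega)
      have hγ₀notB₁ : γ₀ ∉ B₁ := Finset.disjoint_right.mp hdisj12 hγ₀
      have hβ₀notB₂ : β₀ ∉ B₂ := Finset.disjoint_left.mp hdisj12 hβ₀
      set B₄ := insert γ₀ (B₁.erase β₀) with hB₄
      have hB₄card : B₄.card = n := by
        rw [hB₄, Finset.card_insert_of_notMem
          (fun h => hγ₀notB₁ (Finset.mem_of_mem_erase h)), Finset.card_erase_of_mem hβ₀]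
        omega
      have hB₄Y : ↑B₄ ⊆ Y := by
        intro z hz
        rcases Finset.mem_insert.mp (Finset.mem_coe.mp hz) with rfl | h
        · exact hB₂Y hγ₀
        · exact hB₁Y (Finset.mem_of_mem_erase h)
      obtain ⟨w₁, hw₁X, hw₁neg, hw₁pos⟩ := hW B₁ hB₁Y hB₁c
      obtain ⟨w₂, hw₂X, hw₂neg, hw₂pos⟩ := hW B₂ hB₂Y hB₂c
      obtain ⟨w₄, hw₄X, hw₄neg, hw₄pos⟩ := hW B₄ hB₄Y hB₄card
      have hne12 : w₁ ≠ w₂ := by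
        intro h
        apply hw₁neg β₀ hβ₀
        rw [h]
        exact hw₂pos β₀ (hB₁Y hβ₀) hβ₀notB₂
      have hne14 : w₁ ≠ w₄ := by
        intro h
        apply hw₄neg γ₀ (Finset.mem_insert_self _ _)
        rw [← h]
        exact hw₁pos γ₀ (hB₂Y hγ₀) hγ₀notB₁
      set g := fun v => if v = w₂ then w₄ else v with hgdef
      have hgw₁ : g w₁ = w₁ := if_neg hne12
      have hgw₂ : g w₂ = w₄ := if_pos rfl
      have hmemS : ∀ v ∈ ({w₁, w₂} : Finset V), v ∈ X := by
        intro v hv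
        rcases Finset.mem_insert.mp hv with rfl | h
        · exact hw₁X
        · rw [Finset.mem_singleton.mp h]
          exact hw₂X
      have hgX : ∀ v ∈ ({w₁, w₂} : Finset V), g v ∈ X := by
        intro v hv
        rcases Finset.mem_insert.mp hv with rfl | h
        · rw [hgw₁]; exact hw₁X
        · rw [Finset.mem_singleton.mp h, hgw₂]; exact hw₄X
      have hinj2 : Set.InjOn g ↑({w₁, w₂} : Finset V) := by
        intro u hu v hv heq
        rcases Finset.mem_insert.mp (Finset.mem_coe.mp hu) with rfl | h <;>
          rcases Finset.mem_insert.mp (Finset.mem_coe.mp hv) with rfl | h'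
        · rfl
        · rw [Finset.mem_singleton.mp h'] at heq ⊢
          rw [hgw₁, hgw₂] at heq
          exact absurd heq hne14
        · rw [Finset.mem_singleton.mp h] at heq ⊢
          rw [hgw₁, hgw₂] at heq
          exact absurd heq.symm hne14
        · rw [Finset.mem_singleton.mp h, Finset.mem_singleton.mp h']
      have hadjp : ∀ u ∈ ({w₁, w₂} : Finset V), ∀ v ∈ ({w₁, w₂} : Finset V),
          (G.Adj (g u) (g v) ↔ G.Adj u v) := by
        intro u hu v hv
        rcases Finset.mem_insert.mp hu with rfl | h <;>
          rcases Finset.mem_insert.mp hv with rfl | h'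
        · rw [hgw₁]
        · rw [Finset.mem_singleton.mp h', hgw₁, hgw₂]
          exact iff_of_true (hXcl _ hw₁X _ hw₄X hne14) (hXcl _ hw₁X _ hw₂X hne12)
        · rw [Finset.mem_singleton.mp h, hgw₁, hgw₂]
          exact iff_of_true (hXcl _ hw₄X _ hw₁X (Ne.symm hne14))
            (hXcl _ hw₂X _ hw₁X (Ne.symm hne12))
        · rw [Finset.mem_singleton.mp h, Finset.mem_singleton.mp h', hgw₂]
          exact iff_of_false (G.irrefl) (G.irrefl)
      obtain ⟨Φ, Φ', hext, hΦX, hΦY, hΦ'X, hΦ'Y, hΦadj, hΦΦ', hΦ'Φ⟩ :=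
        htrans {w₁, w₂} (fun z hz => Set.mem_union_left _ (hmemS z (Finset.mem_coe.mp hz)))
          g hinj2 (fun v hv _ => hgX v (Finset.mem_coe.mp hv))
          (fun v hv hvY => absurd hvY (hdisj v (hmemS v (Finset.mem_coe.mp hv))))
          (fun u hu v hv => hadjp u (Finset.mem_coe.mp hu) v (Finset.mem_coe.mp hv))
      have hΦw₁ : Φ w₁ = w₁ := by
        rw [hext w₁ (by simp), hgw₁]
      have hΦw₂ : Φ w₂ = w₄ := by
        rw [hext w₂ (by simp), hgw₂]
      obtain ⟨δ, hδ⟩ := Finset.card_pos.mp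
        (show 0 < (B₁.erase β₀).card by rw [Finset.card_erase_of_mem hβ₀]; omega)
      have hδB₁ : δ ∈ B₁ := Finset.mem_of_mem_erase hδ
      have hδB₄ : δ ∈ B₄ := Finset.mem_insert_of_mem hδ
      have hδY : δ ∈ Y := hB₁Y hδB₁
      set d' := Φ' δ with hd'
      have hd'Y : d' ∈ Y := hΦ'Y δ hδY
      have hΦd' : Φ d' = δ := hΦΦ' δ (Set.mem_union_right _ hδY)
      have hadj2 : G.Adj w₂ d' ↔ G.Adj w₄ δ := by
        have h6 := hΦadj w₂ (Set.mem_union_left _ hw₂X) d' (Set.mem_union_right _ hd'Y)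
        rw [hΦw₂, hΦd'] at h6
        exact h6.symm
      have hadj1 : G.Adj w₁ d' ↔ G.Adj w₁ δ := by
        have h6 := hΦadj w₁ (Set.mem_union_left _ hw₁X) d' (Set.mem_union_right _ hd'Y)
        rw [hΦw₁, hΦd'] at h6
        exact h6.symm
      have hd'B₂ : d' ∈ B₂ := by
        by_contra hnot
        exact hw₄neg δ hδB₄ (hadj2.mp (hw₂pos d' hd'Y hnot))
      have hd'B₁ : d' ∈ B₁ := by
        by_contra hnot
        exact hw₁neg δ hδB₁ (hadj1.mp (hw₁pos d' hd'Y hnot))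
      exact (Finset.disjoint_left.mp hdisj12 hd'B₁) hd'B₂
    · -- Y is small: covering trick
      have hYfin : Y.Finite := by
        by_contra hYinf
        have hYinf' : Y.Infinite := hYinf
        obtain ⟨t, htY, htcard⟩ := hYinf'.exists_subset_card_eq (2 * n)
        obtain ⟨B₁, hB₁t, hB₁c⟩ := Finset.exists_subset_card_eq
          (show n ≤ t.card by omega)
        apply hdp
        refine ⟨B₁, t \ B₁, fun z hz => htY (hB₁t hz),
          fun z hz => htY (Finset.mem_sdiff.mp (Finset.mem_coe.mp hz)).1, hB₁c, ?_, ?_⟩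
        · rw [Finset.card_sdiff_of_subset hB₁t, htcard, hB₁c]
          omega
        · exact Finset.disjoint_sdiff
      set Nf := hYfin.toFinset with hNf
      have hNfY : ↑Nf ⊆ Y := by
        intro z hz
        rw [hNf] at hz
        simpa using hz
      have hCNf : C ⊆ Nf := fun z hz => hYfin.mem_toFinset.mpr (hCY hz)
      have hNfcard : n + 1 ≤ Nf.card := hCcard ▸ Finset.card_le_card hCNf
      obtain ⟨c₁, hc₁⟩ := Finset.card_pos.mp (show 0 < C.card by omega)
      set B₁ := C.erase c₁ with hB₁def
      have hB₁card : B₁.card = n := by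
        rw [hB₁def, Finset.card_erase_of_mem hc₁, hCcard]
        omega
      have hB₁Y : ↑B₁ ⊆ Y := fun z hz => hCY (Finset.erase_subset c₁ C (Finset.mem_coe.mp hz))
      set R := Nf \ B₁ with hRdef
      have hRY : ↑R ⊆ Y := fun z hz => hNfY (Finset.mem_coe.mpr
        (Finset.mem_sdiff.mp (Finset.mem_coe.mp hz)).1)
      have hRcard : R.card ≤ n := by
        by_contra hgt
        push_neg at hgt
        obtain ⟨B₂, hB₂R, hB₂c⟩ := Finset.exists_subset_card_eq (show n ≤ R.card by omega)
        apply hdp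
        refine ⟨B₁, B₂, hB₁Y, fun z hz => hRY (hB₂R hz), hB₁card, hB₂c, ?_⟩
        rw [Finset.disjoint_right]
        intro z hz1 hz2
        exact (Finset.mem_sdiff.mp (hB₂R hz1)).2 hz2
      obtain ⟨Pd, hPdB₁, hPdcard⟩ := Finset.exists_subset_card_eq
        (show n - R.card ≤ B₁.card by omega)
      set B₂ := R ∪ Pd with hB₂def
      have hdisjRP : Disjoint R Pd := by
        rw [Finset.disjoint_left]
        intro z hz1 hz2
        exact (Finset.mem_sdiff.mp hz1).2 (hPdB₁ hz2)
      have hB₂card : B₂.card = n := by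
        rw [hB₂def, Finset.card_union_of_disjoint hdisjRP, hPdcard]
        omega
      have hB₂Y : ↑B₂ ⊆ Y := by
        intro z hz
        rcases Finset.mem_union.mp (Finset.mem_coe.mp hz) with h | h
        · exact hRY h
        · exact hB₁Y (hPdB₁ h)
      obtain ⟨w₁, hw₁X, hw₁neg, hw₁pos⟩ := hW B₁ hB₁Y hB₁card
      obtain ⟨w₂, hw₂X, hw₂neg, hw₂pos⟩ := hW B₂ hB₂Y hB₂card
      have hEX : ↑({w₁, w₂} : Finset V) ⊆ X := by
        intro z hz
        rcases Finset.mem_insert.mp (Finset.mem_coe.mp hz) with rfl | h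
        · exact hw₁X
        · rw [Finset.mem_singleton.mp h]
          exact hw₂X
      have hEcard : ({w₁, w₂} : Finset V).card ≤ n := by
        have h2 : ({w₁, w₂} : Finset V).card ≤ ({w₂} : Finset V).card + 1 :=
          Finset.card_insert_le w₁ {w₂}
        rw [Finset.card_singleton] at h2
        omega
      obtain ⟨chat, hchatY, hchatbits⟩ := IHb {w₁, w₂} hEX hEcard (fun _ => True)
      have h1 : G.Adj chat w₁ :=
        (hchatbits w₁ (Finset.mem_insert_self _ _)).mpr trivial
      have h2 : G.Adj chat w₂ :=
        (hchatbits w₂ (Finset.mem_insert_of_mem (Finset.mem_singleton_self _))).mpr trivial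
      have hchatNf : chat ∈ Nf := hYfin.mem_toFinset.mpr hchatY
      by_cases hchatB₁ : chat ∈ B₁
      · exact hw₁neg chat hchatB₁ h1.symm
      · have hchatR : chat ∈ R := Finset.mem_sdiff.mpr ⟨hchatNf, hchatB₁⟩
        exact hw₂neg chat (Finset.mem_union_left _ hchatR) h2.symm

/-- STAGE 1: full genericity of every piece. -/
lemma stage1_both (P : Pack G red) {M N : Set V}
    (hM : IsMaxCliqueIn G {v | red v} M) (hN : IsMaxCliqueIn G {v | ¬ red v} N) (n : ℕ) :
    (∀ C : Finset V, ↑C ⊆ N → C.card ≤ n → ∀ q : V → Prop,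
      ∃ x ∈ M, ∀ c ∈ C, (G.Adj x c ↔ q c)) ∧
    (∀ E : Finset V, ↑E ⊆ M → E.card ≤ n → ∀ q : V → Prop,
      ∃ y ∈ N, ∀ e ∈ E, (G.Adj y e ↔ q e)) := by
  classical
  induction n with
  | zero =>
    obtain ⟨a0, b0, c0, d0, ha0, hb0, hc0, hd0, _⟩ := P.dseed
    constructor
    · intro C hC hcard q
      rw [Nat.le_zero, Finset.card_eq_zero] at hcard
      subst hcard
      obtain ⟨x, hx⟩ := maxclique_nonempty ⟨a0, ha0⟩ hM
      exact ⟨x, hx, by simp⟩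
    · intro E hE hcard q
      rw [Nat.le_zero, Finset.card_eq_zero] at hcard
      subst hcard
      obtain ⟨y, hy⟩ := maxclique_nonempty (⟨c0, hc0⟩ : Set.Nonempty {v | ¬ red v}) hN
      exact ⟨y, hy, by simp⟩
  | succ n IH =>
    obtain ⟨IHr, IHb⟩ := IH
    have hMcl : ∀ x ∈ M, ∀ y ∈ M, x ≠ y → G.Adj x y := fun x hx y hy hne => hM.2.1 hx hy hne
    have hNcl : ∀ x ∈ N, ∀ y ∈ N, x ≠ y → G.Adj x y := fun x hx y hy hne => hN.2.1 hx hy hne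
    have hdisjMN : ∀ x ∈ M, x ∉ N := fun x hx hxN => (hN.1 hxN) (hM.1 hx)
    have hdisjNM : ∀ x ∈ N, x ∉ M := fun x hx hxM => (hN.1 hx) (hM.1 hxM)
    obtain ⟨hDp, hDtp⟩ := stage0 P hM hN
    obtain ⟨a, haM, b, hbM, c, hcN, d, hdN, hab, hcd, hac, had, hbc, hbd⟩ := hDp
    obtain ⟨a', haM', b', hbM', c', hcN', d', hdN', hab', hcd', hac', had', hbd', hbc'⟩ := hDtp
    have htransMN : ∀ S : Finset V, ↑S ⊆ M ∪ N → ∀ g : V → V, Set.InjOn g ↑S →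
        (∀ v ∈ S, v ∈ M → g v ∈ M) → (∀ v ∈ S, v ∈ N → g v ∈ N) →
        (∀ u ∈ S, ∀ v ∈ S, (G.Adj (g u) (g v) ↔ G.Adj u v)) →
        ∃ Φ Φ' : V → V, (∀ v ∈ S, Φ v = g v) ∧ (∀ v ∈ M, Φ v ∈ M) ∧ (∀ v ∈ N, Φ v ∈ N) ∧
          (∀ v ∈ M, Φ' v ∈ M) ∧ (∀ v ∈ N, Φ' v ∈ N) ∧
          (∀ u ∈ M ∪ N, ∀ v ∈ M ∪ N, (G.Adj (Φ u) (Φ v) ↔ G.Adj u v)) ∧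
          (∀ v ∈ M ∪ N, Φ (Φ' v) = v) ∧ (∀ v ∈ M ∪ N, Φ' (Φ v) = v) :=
      fun S hS g hinj hgM hgN hgadj => piece_transport P hM hN S hS g hinj hgM hgN hgadj
    have htransNM : ∀ S : Finset V, ↑S ⊆ N ∪ M → ∀ g : V → V, Set.InjOn g ↑S →
        (∀ v ∈ S, v ∈ N → g v ∈ N) → (∀ v ∈ S, v ∈ M → g v ∈ M) →
        (∀ u ∈ S, ∀ v ∈ S, (G.Adj (g u) (g v) ↔ G.Adj u v)) →
        ∃ Φ Φ' : V → V, (∀ v ∈ S, Φ v = g v) ∧ (∀ v ∈ N, Φ v ∈ N) ∧ (∀ v ∈ M, Φ v ∈ M) ∧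
          (∀ v ∈ N, Φ' v ∈ N) ∧ (∀ v ∈ M, Φ' v ∈ M) ∧
          (∀ u ∈ N ∪ M, ∀ v ∈ N ∪ M, (G.Adj (Φ u) (Φ v) ↔ G.Adj u v)) ∧
          (∀ v ∈ N ∪ M, Φ (Φ' v) = v) ∧ (∀ v ∈ N ∪ M, Φ' (Φ v) = v) := by
      intro S hS g hinj hgN hgM hgadj
      obtain ⟨Φ, Φ', h1, h2, h3, h4, h5, h6, h7, h8⟩ :=
        piece_transport P hM hN S (by rwa [Set.union_comm] at hS) g hinj hgM hgN hgadj
      refine ⟨Φ, Φ', h1, h3, h2, h5, h4, ?_, ?_, ?_⟩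
      · intro u hu v hv
        exact h6 u (by rwa [Set.union_comm] at hu) v (by rwa [Set.union_comm] at hv)
      · intro v hv
        exact h7 v (by rwa [Set.union_comm] at hv)
      · intro v hv
        exact h8 v (by rwa [Set.union_comm] at hv)
    constructor
    · intro C hC hcard q
      rcases Nat.lt_or_ge C.card (n + 1) with hlt | hge
      · exact IHr C hC (Nat.lt_succ_iff.mp hlt) q
      · have hcard' : C.card = n + 1 := le_antisymm hcard hge
        exact oneStep M N hMcl hNcl hdisjMN
          ⟨a, haM, c, hcN, hac⟩ ⟨a', haM', c', hcN', hac'⟩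
          ⟨a, haM, c, hcN, d, hdN, hcd, hac, had⟩
          ⟨a', haM', c', hcN', d', hdN', hcd', hac', had'⟩
          htransMN n IHr IHb C hC hcard' q
    · intro E hE hcard q
      rcases Nat.lt_or_ge E.card (n + 1) with hlt | hge
      · exact IHb E hE (Nat.lt_succ_iff.mp hlt) q
      · have hcard' : E.card = n + 1 := le_antisymm hcard hge
        exact oneStep N M hNcl hMcl hdisjNM
          ⟨c, hcN, a, haM, hac.symm⟩ ⟨c', hcN', a', haM', fun h => hac' h.symm⟩
          ⟨c, hcN, a, haM, b, hbM, hab, hac.symm, hbc.symm⟩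
          ⟨c', hcN', a', haM', b', hbM', hab', fun h => hac' h.symm, fun h => hbc' h.symm⟩
          htransNM n IHb IHr E hE hcard' q

lemma stage1 (P : Pack G red) {M N : Set V}
    (hM : IsMaxCliqueIn G {v | red v} M) (hN : IsMaxCliqueIn G {v | ¬ red v} N)
    (C : Finset V) (hC : ↑C ⊆ N) (q : V → Prop) :
    ∃ x ∈ M, ∀ c ∈ C, (G.Adj x c ↔ q c) :=
  (stage1_both P hM hN C.card).1 C hC le_rfl q

lemma stage1' (P : Pack G red) {M N : Set V}
    (hM : IsMaxCliqueIn G {v | red v} M) (hN : IsMaxCliqueIn G {v | ¬ red v} N)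
    (E : Finset V) (hE : ↑E ⊆ M) (q : V → Prop) :
    ∃ y ∈ N, ∀ e ∈ E, (G.Adj y e ↔ q e) :=
  (stage1_both P hM hN E.card).2 E hE le_rfl q

/-- Powerset injection: if all patterns over `Cf` are realized in `Mset`, then `Mset` has at
least `2 ^ Cf.card` elements. -/
lemma pow_card_le {Mset : Set V} {Cf : Finset V}
    (hreal : ∀ q : V → Prop, ∃ x ∈ Mset, ∀ c ∈ Cf, (G.Adj x c ↔ q c))
    (hMfin : Mset.Finite) : 2 ^ Cf.card ≤ hMfin.toFinset.card := by
  classical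
  set f : Finset V → V := fun T => (hreal (· ∈ T)).choose with hf
  have hfmem : ∀ T, f T ∈ Mset := fun T => (hreal (· ∈ T)).choose_spec.1
  have hfbits : ∀ T, ∀ c ∈ Cf, (G.Adj (f T) c ↔ c ∈ T) :=
    fun T => (hreal (· ∈ T)).choose_spec.2
  have hinj : Set.InjOn f ↑Cf.powerset := by
    intro T₁ h₁ T₂ h₂ heq
    rw [Finset.coe_powerset, Set.mem_preimage, Set.mem_powerset_iff, Finset.coe_subset] at h₁ h₂
    by_contra hne
    have hne' : ¬ (T₁ ⊆ T₂) ∨ ¬ (T₂ ⊆ T₁) := by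
      by_contra hcc
      push_neg at hcc
      exact hne (Finset.Subset.antisymm hcc.1 hcc.2)
    rcases hne' with hns | hns
    · obtain ⟨c, hc1, hc2⟩ := Finset.not_subset.mp hns
      have b1 := (hfbits T₁ c (h₁ hc1)).mpr hc1
      rw [heq] at b1
      exact hc2 ((hfbits T₂ c (h₁ hc1)).mp b1)
    · obtain ⟨c, hc1, hc2⟩ := Finset.not_subset.mp hns
      have b1 := (hfbits T₂ c (h₂ hc1)).mpr hc1
      rw [← heq] at b1
      exact hc2 ((hfbits T₁ c (h₂ hc1)).mp b1)
  have := Finset.card_le_card_of_injOn f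
    (fun T _ => hMfin.mem_toFinset.mpr (hfmem T)) hinj (s := Cf.powerset)
  rwa [Finset.card_powerset] at this

lemma maxclique_infinite_aux {Mset Nset : Set V}
    (hrealR : ∀ Cf : Finset V, ↑Cf ⊆ Nset → ∀ q : V → Prop,
      ∃ x ∈ Mset, ∀ c ∈ Cf, (G.Adj x c ↔ q c))
    (hrealB : ∀ Ef : Finset V, ↑Ef ⊆ Mset → ∀ q : V → Prop,
      ∃ y ∈ Nset, ∀ e ∈ Ef, (G.Adj y e ↔ q e)) :
    Nset.Infinite := by
  classical
  by_contra hNinf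
  rw [Set.not_infinite] at hNinf
  set Nf := hNinf.toFinset with hNf
  have hNfsub : ↑Nf ⊆ Nset := by intro z hz; simpa [hNf] using hz
  by_cases hMfin : Mset.Finite
  · have h1 : 2 ^ Nf.card ≤ hMfin.toFinset.card :=
      pow_card_le (fun q => hrealR Nf hNfsub q) hMfin
    have h2 : 2 ^ hMfin.toFinset.card ≤ Nf.card := by
      have := pow_card_le (Mset := Nset) (Cf := hMfin.toFinset)
        (fun q => hrealB hMfin.toFinset (by intro z hz; simpa using hz) q)
        hNinf
      simpa [hNf] using this
    have c1 : Nf.card < 2 ^ Nf.card := Nat.lt_two_pow_self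
    have c2 : hMfin.toFinset.card < 2 ^ hMfin.toFinset.card := Nat.lt_two_pow_self
    omega
  · rw [← Set.not_infinite, not_not] at hMfin
    obtain ⟨Ef, hEf, hEfcard⟩ := hMfin.exists_subset_card_eq (Nf.card + 1)
    have h1 : 2 ^ Ef.card ≤ Nf.card := by
      have := pow_card_le (Mset := Nset) (Cf := Ef) (fun q => hrealB Ef hEf q) hNinf
      simpa [hNf] using this
    rw [hEfcard] at h1
    have c1 : Nf.card + 1 < 2 ^ (Nf.card + 1) := Nat.lt_two_pow_self
    omega

lemma maxclique_infinite_blue (P : Pack G red) {N : Set V}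
    (hN : IsMaxCliqueIn G {v | ¬ red v} N) : N.Infinite := by
  obtain ⟨a0, b0, c0, d0, ha0, hb0, hc0, hd0, _⟩ := P.dseed
  have hM0 : IsMaxCliqueIn G {v | red v} (cliqueOf G {v | red v} a0) :=
    cliqueOf_isMax P.uocR ha0
  exact maxclique_infinite_aux
    (fun Cf hCf q => stage1 P hM0 hN Cf hCf q)
    (fun Ef hEf q => stage1' P hM0 hN Ef hEf q)

lemma maxclique_infinite_red (P : Pack G red) {M : Set V}
    (hM : IsMaxCliqueIn G {v | red v} M) : M.Infinite := by
  obtain ⟨a0, b0, c0, d0, ha0, hb0, hc0, hd0, _⟩ := P.dseed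
  have hN0 : IsMaxCliqueIn G {v | ¬ red v} (cliqueOf G {v | ¬ red v} c0) :=
    cliqueOf_isMax P.uocB hc0
  exact maxclique_infinite_aux
    (fun Cf hCf q => stage1' P hM hN0 Cf hCf q)
    (fun Ef hEf q => stage1 P hM hN0 Ef hEf q)

/-- Stage 1 with avoidance of a finite set. -/
lemma stage1_avoid (P : Pack G red) {M N : Set V}
    (hM : IsMaxCliqueIn G {v | red v} M) (hN : IsMaxCliqueIn G {v | ¬ red v} N)
    (E : Finset V) (hE : ↑E ⊆ M) (q : V → Prop) (F : Finset V) :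
    ∃ y ∈ N, y ∉ F ∧ ∀ e ∈ E, (G.Adj y e ↔ q e) := by
  classical
  have hMinf := maxclique_infinite_red P hM
  suffices h : ∀ m : ℕ, ∀ (E : Finset V), ↑E ⊆ M → ∀ (q : V → Prop) (F : Finset V),
      (F.filter (· ∈ N)).card ≤ m → ∃ y ∈ N, y ∉ F ∧ ∀ e ∈ E, (G.Adj y e ↔ q e) by
    exact h (F.filter (· ∈ N)).card E hE q F le_rfl
  intro m
  induction m with
  | zero =>
    intro E hE q F hFcard
    obtain ⟨y, hyN, hybits⟩ := stage1' P hM hN E hE q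
    refine ⟨y, hyN, ?_, hybits⟩
    intro hyF
    have : y ∈ F.filter (· ∈ N) := Finset.mem_filter.mpr ⟨hyF, hyN⟩
    rw [Finset.card_eq_zero.mp (Nat.le_zero.mp hFcard)] at this
    exact absurd this (Finset.notMem_empty y)
  | succ m IHm =>
    intro E hE q F hFcard
    by_cases hle : (F.filter (· ∈ N)).card ≤ m
    · exact IHm E hE q F hle
    · have hne : (F.filter (· ∈ N)).Nonempty := by
        rw [← Finset.card_pos]; omega
      obtain ⟨c₀, hc₀⟩ := hne
      have hc₀F : c₀ ∈ F := (Finset.mem_filter.mp hc₀).1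
      obtain ⟨v₀, hv₀M, hv₀E⟩ : ∃ v₀ ∈ M, v₀ ∉ E := by
        obtain ⟨v₀, hv₀⟩ := (hMinf.diff (E : Set V).toFinite).nonempty
        exact ⟨v₀, hv₀.1, fun h => hv₀.2 h⟩
      set E' := insert v₀ E with hE'
      set q' : V → Prop := fun w => if w = v₀ then ¬ G.Adj c₀ v₀ else q w with hq'
      have hfilter : ((F.erase c₀).filter (· ∈ N)).card ≤ m := by
        have : (F.erase c₀).filter (· ∈ N) = (F.filter (· ∈ N)).erase c₀ := by
          ext z
          simp only [Finset.mem_filter, Finset.mem_erase]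
          tauto
        rw [this, Finset.card_erase_of_mem hc₀]
        omega
      have hE'sub : ↑E' ⊆ M := by
        intro z hz
        rw [hE', Finset.coe_insert] at hz
        rcases hz with rfl | hzE
        · exact hv₀M
        · exact hE hzE
      obtain ⟨y, hyN, hyF', hybits⟩ := IHm E' hE'sub q' (F.erase c₀) hfilter
      have hyne : y ≠ c₀ := by
        intro heq
        have hbit := hybits v₀ (Finset.mem_insert_self _ _)
        have hqv : q' v₀ = ¬ G.Adj c₀ v₀ := if_pos rfl
        rw [hqv, heq] at hbit
        exact (iff_not_self hbit)
      refine ⟨y, hyN, ?_, ?_⟩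
      · intro hyF
        exact hyF' (Finset.mem_erase.mpr ⟨hyne, hyF⟩)
      · intro e he
        have hbit := hybits e (Finset.mem_insert_of_mem he)
        have hqe : q' e = q e := if_neg (show ¬ e = v₀ from fun h => hv₀E (h ▸ he))
        rwa [hqe] at hbit

/-- STAGE 2: the one-point extension property. -/
lemma EP (P : Pack G red) (B : Finset V) (hB : ∀ b ∈ B, ¬ red b) (q : V → Prop)
    (M : Set V) (hM : IsMaxCliqueIn G {v | red v} M) :
    ∃ x ∈ M, ∀ b ∈ B, (G.Adj x b ↔ q b) := by
  classical
  induction B using Finset.strongInduction generalizing q with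
  | _ B IH =>
  rcases Finset.eq_empty_or_nonempty B with rfl | ⟨b₀, hb₀⟩
  · obtain ⟨a0, b0, c0, d0, ha0, _⟩ := P.dseed
    obtain ⟨x, hx⟩ := maxclique_nonempty ⟨a0, ha0⟩ hM
    exact ⟨x, hx, by simp⟩
  · have hb₀blue : ¬ red b₀ := hB b₀ hb₀
    set N : Set V := cliqueOf G {v | ¬ red v} b₀ with hNdef
    have hNmax : IsMaxCliqueIn G {v | ¬ red v} N := cliqueOf_isMax P.uocB hb₀blue
    have hb₀N : b₀ ∈ N := mem_cliqueOf_self hb₀blue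
    by_contra hmiss
    have hmiss' : ∀ x ∈ M, (∀ β ∈ B.erase b₀, (G.Adj x β ↔ q β)) →
        ¬ (G.Adj x b₀ ↔ q b₀) := by
      intro x hx hbits hb
      apply hmiss
      refine ⟨x, hx, ?_⟩
      intro b hb'
      by_cases hbb : b = b₀
      · rwa [hbb]
      · exact hbits b (Finset.mem_erase.mpr ⟨hbb, hb'⟩)
    obtain ⟨xs, hxsM, hxsbits⟩ := IH (B.erase b₀) (Finset.erase_ssubset hb₀)
      (fun b hb' => hB b (Finset.mem_of_mem_erase hb')) q
    have hMinf := maxclique_infinite_red P hM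
    obtain ⟨x₀, hx₀⟩ := (hMinf.diff (Set.finite_singleton xs)).nonempty
    have hx₀M : x₀ ∈ M := hx₀.1
    have hx₀ne : x₀ ≠ xs := by
      intro h; exact hx₀.2 (h ▸ rfl)
    set q'' : V → Prop := fun v => if v = x₀ then G.Adj b₀ x₀ else q b₀ with hq''
    obtain ⟨b'', hb''N, hb''F, hb''bits⟩ := stage1_avoid P hM hNmax {x₀, xs}
      (by intro z hz
          rcases Finset.mem_insert.mp (Finset.mem_coe.mp hz) with rfl | hz'
          · exact hx₀M
          · rw [Finset.mem_singleton.mp hz']; exact hxsM)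
      q'' (insert x₀ B)
    have hb''x₀ : G.Adj b'' x₀ ↔ G.Adj b₀ x₀ := by
      have := hb''bits x₀ (Finset.mem_insert_self _ _)
      rwa [show q'' x₀ = G.Adj b₀ x₀ from if_pos rfl] at this
    have hb''xs : G.Adj b'' xs ↔ q b₀ := by
      have := hb''bits xs (Finset.mem_insert_of_mem (Finset.mem_singleton_self _))
      rwa [show q'' xs = q b₀ from if_neg (fun h => hx₀ne h.symm)] at this
    have hb''notB : b'' ∉ B := fun h => hb''F (Finset.mem_insert_of_mem h)
    have hb''nex₀ : b'' ≠ x₀ := fun h => hb''F (h ▸ Finset.mem_insert_self _ _)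
    have hb''blue : ¬ red b'' := hNmax.1 hb''N
    -- the partial isomorphism
    set S : Finset V := insert x₀ B with hS
    set g : V → V := fun v => if v = b₀ then b'' else v with hg
    have hgb₀ : g b₀ = b'' := if_pos rfl
    have hgother : ∀ v, v ≠ b₀ → g v = v := fun v hv => if_neg hv
    have hb₀S : b₀ ∈ S := Finset.mem_insert_of_mem hb₀
    have hb''notS : b'' ∉ S := hb''F
    have hadjfact : ∀ v ∈ S, v ≠ b₀ → (G.Adj b'' v ↔ G.Adj b₀ v) := by
      intro v hv hvne
      rcases Finset.mem_insert.mp hv with rfl | hvB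
      · exact hb''x₀
      · have hvblue : ¬ red v := hB v hvB
        by_cases hvN : v ∈ N
        · constructor
          · intro _; exact ((maxclique_adj hNmax hb₀N hvN (fun h => hvne h.symm)).symm).symm
          · intro _
            exact maxclique_adj hNmax hb''N hvN (fun h => hb''notB (h ▸ hvB))
        · constructor
          · intro h
            exact absurd (mem_maxclique_of_adj P.uocB hNmax hb''N hvblue h) hvN
          · intro h
            exact absurd (mem_maxclique_of_adj P.uocB hNmax hb₀N hvblue h) hvN
    have hpi : IsPartialIso G red ↑S g := by
      refine ⟨?_, ?_, ?_⟩
      · intro u hu v hv heq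
        by_cases hub : u = b₀ <;> by_cases hvb : v = b₀
        · rw [hub, hvb]
        · rw [hub, hgb₀] at heq
          rw [hgother v hvb] at heq
          exact absurd (heq ▸ (Finset.mem_coe.mp hv)) hb''notS
        · rw [hvb, hgb₀] at heq
          rw [hgother u hub] at heq
          exact absurd (heq ▸ (Finset.mem_coe.mp hu)) hb''notS
        · rw [hgother u hub, hgother v hvb] at heq
          exact heq
      · intro v hv
        by_cases hvb : v = b₀
        · rw [hvb, hgb₀]
          exact iff_of_false hb''blue hb₀blue
        · rw [hgother v hvb]
      · intro u hu v hv
        by_cases hub : u = b₀ <;> by_cases hvb : v = b₀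
        · rw [hub, hvb, hgb₀]
          exact iff_of_false (G.irrefl) (G.irrefl)
        · rw [hub, hgb₀, hgother v hvb]
          exact hadjfact v hv hvb
        · rw [hvb, hgb₀, hgother u hub]
          constructor
          · intro h
            exact ((hadjfact u hu hub).mp h.symm).symm
          · intro h
            exact ((hadjfact u hu hub).mpr h.symm).symm
        · rw [hgother u hub, hgother v hvb]
    obtain ⟨ψ, hψred, hψext⟩ := P.uh ↑S S.finite_toSet g hpi
    have hx₀red : red x₀ := hM.1 hx₀M
    have hψx₀ : ψ x₀ = x₀ := by
      rw [hψext x₀ (Finset.mem_coe.mpr (Finset.mem_insert_self _ _))]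
      exact hgother x₀ (fun h => hb₀blue (h ▸ hx₀red))
    have hψsx₀ : ψ.symm x₀ = x₀ := by
      conv_lhs => rw [← hψx₀]
      exact ψ.symm_apply_apply x₀
    set x' : V := ψ.symm xs with hx'
    have hψx' : ψ x' = xs := ψ.apply_symm_apply xs
    have hx'red : red x' := by
      have h2 := hψred x'
      rw [hψx'] at h2
      exact h2.mp (hM.1 hxsM)
    have hx'M : x' ∈ M := by
      have hMeq := maxclique_eq_cliqueOf P.uocR hM hx₀M
      rw [hMeq]
      refine ⟨hx'red, Or.inr ?_⟩
      have hadjx : G.Adj x₀ xs := maxclique_adj hM hx₀M hxsM hx₀ne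
      have h3 := (ψ.symm.map_adj_iff (v := x₀) (w := xs)).mpr hadjx
      rwa [hψsx₀] at h3
    have hx'bits : ∀ β ∈ B.erase b₀, (G.Adj x' β ↔ q β) := by
      intro β hβ
      have hβS : β ∈ S := Finset.mem_insert_of_mem (Finset.mem_of_mem_erase hβ)
      have hψβ : ψ β = β := by
        rw [hψext β (Finset.mem_coe.mpr hβS)]
        exact hgother β (Finset.mem_erase.mp hβ).1
      have h4 : G.Adj (ψ x') (ψ β) ↔ G.Adj x' β := ψ.map_adj_iff
      rw [hψx', hψβ] at h4
      rw [← h4]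
      exact hxsbits β hβ
    apply hmiss' x' hx'M hx'bits
    have hψb₀ : ψ b₀ = b'' := by
      rw [hψext b₀ (Finset.mem_coe.mpr hb₀S)]; exact hgb₀
    have h5 : G.Adj (ψ x') (ψ b₀) ↔ G.Adj x' b₀ := ψ.map_adj_iff
    rw [hψx', hψb₀] at h5
    rw [← h5]
    constructor
    · intro h; exact hb''xs.mp h.symm
    · intro h; exact (hb''xs.mpr h).symm

lemma EP_avoid (P : Pack G red) (B : Finset V) (hB : ∀ b ∈ B, ¬ red b) (q : V → Prop)
    (M : Set V) (hM : IsMaxCliqueIn G {v | red v} M) (F : Finset V) :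
    ∃ x ∈ M, x ∉ F ∧ ∀ b ∈ B, (G.Adj x b ↔ q b) := by
  classical
  obtain ⟨a0, b0, c0, d0, ha0, hb0, hc0, hd0, _⟩ := P.dseed
  have hNhat : IsMaxCliqueIn G {v | ¬ red v} (cliqueOf G {v | ¬ red v} c0) :=
    cliqueOf_isMax P.uocB hc0
  suffices h : ∀ m : ℕ, ∀ (B : Finset V), (∀ b ∈ B, ¬ red b) → ∀ (q : V → Prop) (F : Finset V),
      (F.filter (· ∈ M)).card ≤ m → ∃ x ∈ M, x ∉ F ∧ ∀ b ∈ B, (G.Adj x b ↔ q b) by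
    exact h (F.filter (· ∈ M)).card B hB q F le_rfl
  intro m
  induction m with
  | zero =>
    intro B hB q F hFcard
    obtain ⟨x, hxM, hxbits⟩ := EP P B hB q M hM
    refine ⟨x, hxM, ?_, hxbits⟩
    intro hxF
    have : x ∈ F.filter (· ∈ M) := Finset.mem_filter.mpr ⟨hxF, hxM⟩
    rw [Finset.card_eq_zero.mp (Nat.le_zero.mp hFcard)] at this
    exact absurd this (Finset.notMem_empty x)
  | succ m IHm =>
    intro B hB q F hFcard
    by_cases hle : (F.filter (· ∈ M)).card ≤ m
    · exact IHm B hB q F hle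
    · have hne : (F.filter (· ∈ M)).Nonempty := by
        rw [← Finset.card_pos]; omega
      obtain ⟨f₀, hf₀⟩ := hne
      have hf₀F : f₀ ∈ F := (Finset.mem_filter.mp hf₀).1
      obtain ⟨w₀, hw₀N, hw₀B, _⟩ := stage1_avoid P hM hNhat ∅ (by simp) (fun _ => True) B
      have hw₀blue : ¬ red w₀ := hNhat.1 hw₀N
      set B' := insert w₀ B with hB'
      set q' : V → Prop := fun v => if v = w₀ then ¬ G.Adj f₀ w₀ else q v with hq'
      have hfilter : ((F.erase f₀).filter (· ∈ M)).card ≤ m := by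
        have heq : (F.erase f₀).filter (· ∈ M) = (F.filter (· ∈ M)).erase f₀ := by
          ext z
          simp only [Finset.mem_filter, Finset.mem_erase]
          tauto
        rw [heq, Finset.card_erase_of_mem hf₀]
        omega
      obtain ⟨x, hxM, hxF', hxbits⟩ := IHm B' (by
          intro b hb
          rcases Finset.mem_insert.mp hb with rfl | hbB
          · exact hw₀blue
          · exact hB b hbB) q' (F.erase f₀) hfilter
      have hxne : x ≠ f₀ := by
        intro heq
        have hbit := hxbits w₀ (Finset.mem_insert_self _ _)
        have hqw : q' w₀ = ¬ G.Adj f₀ w₀ := if_pos rfl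
        rw [hqw, heq] at hbit
        exact (iff_not_self hbit)
      refine ⟨x, hxM, ?_, ?_⟩
      · intro hxF
        exact hxF' (Finset.mem_erase.mpr ⟨hxne, hxF⟩)
      · intro b hb
        have hbit := hxbits b (Finset.mem_insert_of_mem hb)
        have hqb : q' b = q b := if_neg (show ¬ b = w₀ from fun h => hw₀B (h ▸ hb))
        rwa [hqb] at hbit

/-- STAGE 3 step: extending a partial embedding by one red vertex. -/
lemma extend_step (P : Pack G red) {W : Type} (H : SimpleGraph W) (redH : W → Prop)
    (hHUoC : IsUnionOfCliques H {w | redH w})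
    (hcard : Cardinal.mk {M' : Set W // IsMaxCliqueIn H {w | redH w} M'} ≤
             Cardinal.mk {M' : Set V // IsMaxCliqueIn G {v | red v} M'})
    (S₀ : Finset W) (w : W) (hw : w ∉ S₀) (hwred : redH w) (f₀ : W → V)
    (hinj : Set.InjOn f₀ ↑S₀) (hcol : ∀ u ∈ S₀, (red (f₀ u) ↔ redH u))
    (hadj : ∀ u ∈ S₀, ∀ u' ∈ S₀, (G.Adj (f₀ u) (f₀ u') ↔ H.Adj u u')) :
    ∃ x : V, red x ∧ (∀ u ∈ S₀, f₀ u ≠ x) ∧ ∀ u ∈ S₀, (G.Adj x (f₀ u) ↔ H.Adj w u) := by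
  classical
  have hMexists : ∃ M : Set V, IsMaxCliqueIn G {v | red v} M ∧
      (∀ u ∈ S₀, redH u → H.Adj w u → f₀ u ∈ M) ∧
      (∀ u ∈ S₀, redH u → ¬ H.Adj w u → f₀ u ∉ M) := by
    by_cases h1 : ∃ u₁ ∈ S₀, redH u₁ ∧ H.Adj w u₁
    · obtain ⟨u₁, hu₁S, hu₁red, hu₁adj⟩ := h1
      have hu₁red' : red (f₀ u₁) := (hcol u₁ hu₁S).mpr hu₁red
      set M := cliqueOf G {v | red v} (f₀ u₁) with hMdef
      have hMmax : IsMaxCliqueIn G {v | red v} M := cliqueOf_isMax P.uocR hu₁red'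
      refine ⟨M, hMmax, ?_, ?_⟩
      · intro u huS hured hadjw
        by_cases hequ : u = u₁
        · rw [hequ]; exact mem_cliqueOf_self hu₁red'
        · have hadjH : H.Adj u u₁ := hHUoC u hured w hwred u₁ hu₁red hadjw.symm hu₁adj hequ
          have hadjG : G.Adj (f₀ u) (f₀ u₁) := (hadj u huS u₁ hu₁S).mpr hadjH
          exact ⟨(hcol u huS).mpr hured, Or.inr hadjG.symm⟩
      · intro u huS hured hnadj hmem
        rcases hmem.2 with heq | hadj'
        · exact hnadj (by rwa [hinj huS hu₁S heq] )
        · have hadjH : H.Adj u₁ u := (hadj u₁ hu₁S u huS).mp hadj'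
          have hwu : w ≠ u := fun h => hw (h ▸ huS)
          exact hnadj (hHUoC w hwred u₁ hu₁red u hured hu₁adj hadjH hwu)
    · push_neg at h1
      have hexM : ∃ M : Set V, IsMaxCliqueIn G {v | red v} M ∧
          ∀ u ∈ S₀, redH u → f₀ u ∉ M := by
        by_contra hno
        push_neg at hno
        set J : Finset (Set V) :=
          (S₀.filter redH).image (fun u => cliqueOf G {v | red v} (f₀ u)) with hJ
        set KH : Finset (Set W) :=
          (S₀.filter redH).image (fun u => cliqueOf H {x | redH x} u) with hKH
        set K : Finset (Set W) := insert (cliqueOf H {x | redH x} w) KH with hK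
        have hno' : ∀ M' : Set V, IsMaxCliqueIn G {v | red v} M' →
            ∃ u ∈ S₀, redH u ∧ f₀ u ∈ M' := by
          intro M' hM'
          obtain ⟨u, huS, hured, hfu⟩ := hno M' hM'
          exact ⟨u, huS, hured, hfu⟩
        have hallJ : ∀ M' : Set V, IsMaxCliqueIn G {v | red v} M' → M' ∈ J := by
          intro M' hM'
          obtain ⟨u, huS, hured, hfu⟩ := hno' M' hM'
          have heqM : M' = cliqueOf G {v | red v} (f₀ u) := maxclique_eq_cliqueOf P.uocR hM' hfu
          rw [heqM, hJ]
          exact Finset.mem_image.mpr ⟨u, Finset.mem_filter.mpr ⟨huS, hured⟩, rfl⟩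
        have hGle : Cardinal.mk {M' : Set V // IsMaxCliqueIn G {v | red v} M'} ≤
            (J.card : Cardinal) := by
          rw [← Cardinal.mk_coe_finset]
          apply Cardinal.mk_le_of_injective
            (f := fun M' : {M' : Set V // IsMaxCliqueIn G {v | red v} M'} =>
              (⟨M'.1, hallJ M'.1 M'.2⟩ : {K' // K' ∈ J}))
          intro M₁ M₂ heq
          have h2 := congrArg Subtype.val heq
          exact Subtype.ext h2
        have hKmax : ∀ K' ∈ K, IsMaxCliqueIn H {x | redH x} K' := by
          intro K' hK'
          rcases Finset.mem_insert.mp hK' with rfl | hK'2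
          · exact cliqueOf_isMax hHUoC hwred
          · obtain ⟨u, hu, hequ⟩ := Finset.mem_image.mp hK'2
            rw [← hequ]
            exact cliqueOf_isMax hHUoC (Finset.mem_filter.mp hu).2
        have hKle : (K.card : Cardinal) ≤
            Cardinal.mk {M' : Set W // IsMaxCliqueIn H {x | redH x} M'} := by
          rw [← Cardinal.mk_coe_finset]
          apply Cardinal.mk_le_of_injective
            (f := fun K' : {K' // K' ∈ K} =>
              (⟨K'.1, hKmax K'.1 K'.2⟩ : {M' : Set W // IsMaxCliqueIn H {x | redH x} M'}))
          intro K₁ K₂ heq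
          have h2 := congrArg Subtype.val heq
          exact Subtype.ext h2
        have hwnot : cliqueOf H {x | redH x} w ∉ KH := by
          intro hmem
          obtain ⟨u, hu, hequ⟩ := Finset.mem_image.mp hmem
          obtain ⟨huS, hured⟩ := Finset.mem_filter.mp hu
          have hwmem : w ∈ cliqueOf H {x | redH x} u := by
            rw [hequ]; exact mem_cliqueOf_self hwred
          rcases hwmem.2 with heq | hadj'
          · exact hw (heq ▸ huS)
          · exact h1 u huS hured hadj'.symm
        have hKcard : K.card = KH.card + 1 := Finset.card_insert_of_notMem hwnot
        have hJle : J.card ≤ KH.card := by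
          apply Finset.card_le_card_of_surjOn
            (f := fun K' : Set W => if h : ∃ u, u ∈ S₀ ∧ redH u ∧ u ∈ K' then
              cliqueOf G {v | red v} (f₀ h.choose) else ∅)
          intro Jelem hJelem
          rw [hJ] at hJelem
          obtain ⟨u₁, hu₁, hequ₁⟩ := Finset.mem_image.mp (Finset.mem_coe.mp hJelem)
          obtain ⟨hu₁S, hu₁red⟩ := Finset.mem_filter.mp hu₁
          refine ⟨cliqueOf H {x | redH x} u₁, ?_, ?_⟩
          · rw [hKH]
            exact Finset.mem_coe.mpr (Finset.mem_image.mpr ⟨u₁, hu₁, rfl⟩)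
          · have hex : ∃ u, u ∈ S₀ ∧ redH u ∧ u ∈ cliqueOf H {x | redH x} u₁ :=
              ⟨u₁, hu₁S, hu₁red, mem_cliqueOf_self hu₁red⟩
            show (if h : ∃ u, u ∈ S₀ ∧ redH u ∧ u ∈ cliqueOf H {x | redH x} u₁ then
              cliqueOf G {v | red v} (f₀ h.choose) else ∅) = Jelem
            rw [dif_pos hex]
            obtain ⟨hu'S, hu'red, hu'mem⟩ := hex.choose_spec
            set u' := hex.choose
            rcases hu'mem.2 with heq | hadj'
            · rw [heq]; exact hequ₁
            · have hadjG : G.Adj (f₀ u₁) (f₀ u') := (hadj u₁ hu₁S u' hu'S).mpr hadj'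
              have hmem2 : f₀ u' ∈ cliqueOf G {v | red v} (f₀ u₁) :=
                ⟨(hcol u' hu'S).mpr hu'red, Or.inr hadjG⟩
              have := maxclique_eq_cliqueOf P.uocR
                (cliqueOf_isMax P.uocR ((hcol u₁ hu₁S).mpr hu₁red)) hmem2
              rw [← this]
              exact hequ₁
        have hchain : (K.card : Cardinal) ≤ (J.card : Cardinal) :=
          le_trans hKle (le_trans hcard hGle)
        have hKJ : K.card ≤ J.card := Nat.cast_le.mp hchain
        omega
      obtain ⟨M, hMmax, hMnone⟩ := hexM
      refine ⟨M, hMmax, ?_, ?_⟩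
      · intro u huS hured hadjw
        exact absurd hadjw (h1 u huS hured)
      · intro u huS hured _
        exact hMnone u huS hured
  obtain ⟨M, hMmax, hMin, hMout⟩ := hMexists
  set B : Finset V := (S₀.filter (fun u => ¬ redH u)).image f₀ with hBdef
  have hB : ∀ b ∈ B, ¬ red b := by
    intro b hb
    obtain ⟨u, hu, hequ⟩ := Finset.mem_image.mp hb
    obtain ⟨huS, hublue⟩ := Finset.mem_filter.mp hu
    rw [← hequ]
    exact fun h => hublue ((hcol u huS).mp h)
  set q : V → Prop := fun v => ∃ u ∈ S₀, ¬ redH u ∧ f₀ u = v ∧ H.Adj w u with hqdef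
  obtain ⟨x, hxM, hxF, hxbits⟩ := EP_avoid P B hB q M hMmax (S₀.image f₀)
  have hxne : ∀ u ∈ S₀, f₀ u ≠ x :=
    fun u hu h => hxF (Finset.mem_image.mpr ⟨u, hu, h⟩)
  refine ⟨x, hMmax.1 hxM, hxne, ?_⟩
  intro u hu
  by_cases hured : redH u
  · constructor
    · intro hadjx
      by_contra hnadj
      apply hMout u hu hured hnadj
      have hMeq := maxclique_eq_cliqueOf P.uocR hMmax hxM
      rw [hMeq]
      exact ⟨(hcol u hu).mpr hured, Or.inr hadjx⟩
    · intro hadjH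
      exact maxclique_adj hMmax hxM (hMin u hu hured hadjH) (fun h => hxne u hu h.symm)
  · have hfuB : f₀ u ∈ B :=
      Finset.mem_image.mpr ⟨u, Finset.mem_filter.mpr ⟨hu, hured⟩, rfl⟩
    rw [hxbits (f₀ u) hfuB]
    constructor
    · rintro ⟨u', hu', hu'b, hequ, hadj'⟩
      rwa [← hinj hu' hu hequ]
    · intro hadjH
      exact ⟨u, hu, hured, rfl, hadjH⟩

/-- Backward direction. -/
lemma realizes_of (P : Pack G red) {W : Type} (H : SimpleGraph W) (redH : W → Prop)
    (hFin : Finite W)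
    (hHr : IsUnionOfCliques H {w | redH w}) (hHb : IsUnionOfCliques H {w | ¬ redH w})
    (hcr : Cardinal.mk {M' : Set W // IsMaxCliqueIn H {w | redH w} M'} ≤
           Cardinal.mk {M' : Set V // IsMaxCliqueIn G {v | red v} M'})
    (hcb : Cardinal.mk {M' : Set W // IsMaxCliqueIn H {w | ¬ redH w} M'} ≤
           Cardinal.mk {M' : Set V // IsMaxCliqueIn G {v | ¬ red v} M'}) :
    Realizes G red H redH := by
  classical
  obtain ⟨a0, b0, c0, d0, ha0, _⟩ := P.dseed
  have key : ∀ S : Finset W, ∃ f : W → V, Set.InjOn f ↑S ∧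
      (∀ u ∈ S, (red (f u) ↔ redH u)) ∧
      (∀ u ∈ S, ∀ u' ∈ S, (G.Adj (f u) (f u') ↔ H.Adj u u')) := by
    intro S
    induction S using Finset.induction_on with
    | empty =>
      refine ⟨fun _ => a0, ?_, ?_, ?_⟩ <;> simp [Set.InjOn]
    | @insert w S₀ hw IH =>
      obtain ⟨f₀, hinj, hcol, hadj⟩ := IH
      have hstep : ∀ x : V, (red x ↔ redH w) → (∀ u ∈ S₀, f₀ u ≠ x) →
          (∀ u ∈ S₀, (G.Adj x (f₀ u) ↔ H.Adj w u)) →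
          ∃ f : W → V, Set.InjOn f ↑(insert w S₀) ∧
            (∀ u ∈ insert w S₀, (red (f u) ↔ redH u)) ∧
            (∀ u ∈ insert w S₀, ∀ u' ∈ insert w S₀,
              (G.Adj (f u) (f u') ↔ H.Adj u u')) := by
        intro x hxcol hxne hxadj
        have hne : ∀ u ∈ S₀, u ≠ w := fun u hu h => hw (h ▸ hu)
        have hupd : ∀ u ∈ S₀, Function.update f₀ w x u = f₀ u :=
          fun u hu => Function.update_of_ne (hne u hu) x f₀
        refine ⟨Function.update f₀ w x, ?_, ?_, ?_⟩
        · intro u hu u' hu' heq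
          rw [Finset.coe_insert, Set.mem_insert_iff] at hu hu'
          rcases hu with rfl | huS <;> rcases hu' with rfl | hu'S
          · rfl
          · exfalso
            rw [Function.update_self, hupd u' hu'S] at heq
            exact hxne u' hu'S heq.symm
          · exfalso
            rw [Function.update_self, hupd u huS] at heq
            exact hxne u huS heq
          · rw [hupd u huS, hupd u' hu'S] at heq
            exact hinj huS hu'S heq
        · intro u hu
          rcases Finset.mem_insert.mp hu with rfl | huS
          · rw [Function.update_self]
            exact hxcol
          · rw [hupd u huS]
            exact hcol u huS
        · intro u hu u' hu'
          rcases Finset.mem_insert.mp hu with rfl | huS <;>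
            rcases Finset.mem_insert.mp hu' with rfl | hu'S
          · rw [Function.update_self]
            exact iff_of_false (G.irrefl) (H.irrefl)
          · rw [Function.update_self, hupd u' hu'S]
            exact hxadj u' hu'S
          · rw [Function.update_self, hupd u huS]
            constructor
            · intro h
              exact ((hxadj u huS).mp h.symm).symm
            · intro h
              exact ((hxadj u huS).mpr h.symm).symm
          · rw [hupd u huS, hupd u' hu'S]
            exact hadj u huS u' hu'S
      by_cases hwred : redH w
      · obtain ⟨x, hxred, hxne, hxadj⟩ :=
          extend_step P H redH hHr hcr S₀ w hw hwred f₀ hinj hcol hadj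
        exact hstep x (iff_of_true hxred hwred) hxne hxadj
      · obtain ⟨x, hxred, hxne, hxadj⟩ :=
          extend_step P.swap H (fun u => ¬ redH u) hHb hcb S₀ w hw hwred f₀ hinj
            (fun u hu => not_iff_not.mpr (hcol u hu)) hadj
        exact hstep x (iff_of_false hxred hwred) hxne hxadj
  haveI : Fintype W := Fintype.ofFinite W
  obtain ⟨f, hinj, hcol, hadj⟩ := key Finset.univ
  refine ⟨f, ?_, ?_, ?_⟩
  · intro u u' heq
    exact hinj (by simp) (by simp) heq
  · intro u
    exact hcol u (Finset.mem_univ u)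
  · intro u u'
    exact hadj u (Finset.mem_univ u) u' (Finset.mem_univ u')

end Backward

end Stmt19


/-- a basic piecewise ultrahomogeneous CUH graph realizing `D` and `D̃`
realizes exactly the finite 2-colored graphs whose red class is a disjoint union of at
most `α_R` cliques and whose blue class is a disjoint union of at most `α_B` cliques. -/
theorem stmt_19 {V : Type} (G : SimpleGraph V) (red : V → Prop)
    (hG : IsBasicCUH G red)
    (hpw : ∀ MR MB : Set V, IsMaxCliqueIn G {v | red v} MR →
      IsMaxCliqueIn G {v | ¬ red v} MB →
      Ultrahomogeneous (G.induce (MR ∪ MB)) (fun x => red x.1))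
    (hD : Realizes G red Dgraph Dred) (hDt : Realizes G red Dtilde Dred)
    (αR αB : Cardinal)
    (hαR : Cardinal.mk {M : Set V // IsMaxCliqueIn G {v | red v} M} = αR)
    (hαB : Cardinal.mk {M : Set V // IsMaxCliqueIn G {v | ¬ red v} M} = αB) :
    ∀ (W : Type) (H : SimpleGraph W) (redH : W → Prop), Finite W →
      (Realizes G red H redH ↔
        (IsUnionOfCliques H {w | redH w} ∧ IsUnionOfCliques H {w | ¬ redH w} ∧
         Cardinal.mk {M : Set W // IsMaxCliqueIn H {w | redH w} M} ≤ αR ∧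
         Cardinal.mk {M : Set W // IsMaxCliqueIn H {w | ¬ redH w} M} ≤ αB)) := by
  classical
  intro W H redH hFin
  obtain ⟨hCUH, hnb, ⟨ur, vr, hur, hvr, hurvr, hnadjr⟩, ⟨ub, vb, hub, hvb, hubvb, hnadjb⟩⟩ := hG
  obtain ⟨hcnt, hinf, hUH, hUoCr, hUoCb⟩ := hCUH
  have P : Stmt19.Pack G red :=
    ⟨hUH, hUoCr, hUoCb, hpw, Stmt19.dseed_of_realizes hD, Stmt19.dtseed_of_realizes hDt⟩
  constructor
  · rintro ⟨f, hfinj, hfcol, hfadj⟩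
    refine ⟨?_, ?_, ?_, ?_⟩
    · intro u hu v hv w' hw' h1 h2 hne
      have := hUoCr (f u) ((hfcol u).mpr hu) (f v) ((hfcol v).mpr hv) (f w') ((hfcol w').mpr hw')
        ((hfadj u v).mpr h1) ((hfadj v w').mpr h2) (fun h => hne (hfinj h))
      exact (hfadj u w').mp this
    · intro u hu v hv w' hw' h1 h2 hne
      have := hUoCb (f u) (fun h => hu ((hfcol u).mp h)) (f v) (fun h => hv ((hfcol v).mp h))
        (f w') (fun h => hw' ((hfcol w').mp h))
        ((hfadj u v).mpr h1) ((hfadj v w').mpr h2) (fun h => hne (hfinj h))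
      exact (hfadj u w').mp this
    · rw [← hαR]
      exact Stmt19.card_maxCliques_le hUoCr f hfinj (fun w' => hfcol w') hfadj hur
    · rw [← hαB]
      exact Stmt19.card_maxCliques_le hUoCb f hfinj
        (fun w' => not_iff_not.mpr (hfcol w')) hfadj hub
  · rintro ⟨hHr, hHb, hcr, hcb⟩
    rw [← hαR] at hcr
    rw [← hαB] at hcb
    exact Stmt19.realizes_of P H redH hFin hHr hHb hcr hcb
end
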